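/- arXiv:2509.00932 — 15 statements merged into one kernel-verified Lean document; each statement's English description precedes it below -/
import Mathlib

section
/- Let N ≥ 2, let {α, β} be a partition of {1,…,N} into nonempty sets (the 'interior' and 'boundary' indices), let ~ be an adjacency relation on {1,…,N}, and let A be a real N×N matrix with all row sums zero such that A_{ij} = 0 whenever i ≠ j and i is not ~-adjacent to j. Assume: (a) α is ~-connected; (b) every j ∈ β is ~-adjacent to some i ∈ α; (c) for every i ∈ α there exist disjoint sets α_i ⊆ α and nonempty β_i ⊆ {1,…,N} such that i ∈ α_i, every index ~-adjacent to an element of α_i lies in α_i ∪ β_i, the matrix A_{α_iα_i} is invertible with entrywise positive inverse, and A_{α_iα_i}^{-1} A_{α_iβ_i} is entrywise negative. Then for every u ∈ ℝ^N with (Au)_i ≥ 0 for all i ∈ α: min_{1≤k≤N} u_k ≥ min_{j∈β} u_j; and if the minimum of u over all of {1,…,N} is attained at some index in α, then u is constant. -/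
open Matrix Finset

/-- Submatrix of `A` with rows in `γ` and columns in `δ`. -/
def subm {N : ℕ} (A : Matrix (Fin N) (Fin N) ℝ) (γ δ : Finset (Fin N)) :
    Matrix ↥γ ↥δ ℝ :=
  A.submatrix Subtype.val Subtype.val

/-- `γ` is connected with respect to the adjacency relation `adj`:
any two of its elements are joined by a path inside `γ` whose consecutive
vertices are adjacent. -/
def AdjConnected {N : ℕ} (adj : Fin N → Fin N → Prop) (γ : Finset (Fin N)) : Prop :=
  ∀ i ∈ γ, ∀ j ∈ γ, Relation.ReflTransGen (fun a b => a ∈ γ ∧ b ∈ γ ∧ adj a b) i j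

lemma sum_split_aux {N : ℕ} (adj : Fin N → Fin N → Prop) (A : Matrix (Fin N) (Fin N) ℝ)
    (hz : ∀ i j, i ≠ j → ¬ adj i j → A i j = 0)
    (αi βi : Finset (Fin N)) (hdis : Disjoint αi βi)
    (hcl : ∀ a ∈ αi, ∀ b, adj a b → b ∈ αi ∪ βi)
    (a : Fin N) (ha : a ∈ αi) (v : Fin N → ℝ) :
    ∑ j, A a j * v j = ∑ j ∈ αi, A a j * v j + ∑ j ∈ βi, A a j * v j := by
  rw [← Finset.sum_union hdis]
  refine (Finset.sum_subset (Finset.subset_univ _) ?_).symm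
  intro j _ hj
  have hne : a ≠ j := fun h => hj (h ▸ Finset.mem_union_left _ ha)
  have hnadj : ¬ adj a j := fun h => hj (hcl a ha j h)
  rw [hz a j hne hnadj, zero_mul]

lemma local_min_aux {N : ℕ} (α : Finset (Fin N)) (adj : Fin N → Fin N → Prop)
    (A : Matrix (Fin N) (Fin N) ℝ)
    (hrow : ∀ i, ∑ j, A i j = 0)
    (hz : ∀ i j, i ≠ j → ¬ adj i j → A i j = 0)
    (αi βi : Finset (Fin N)) (hsub : αi ⊆ α)
    (hdis : Disjoint αi βi)
    (hcl : ∀ a ∈ αi, ∀ b, adj a b → b ∈ αi ∪ βi)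
    (hunit : IsUnit (subm A αi αi))
    (hpos : ∀ p q, 0 < (subm A αi αi)⁻¹ p q)
    (hneg : ∀ p q, ((subm A αi αi)⁻¹ * subm A αi βi) p q < 0)
    (u : Fin N → ℝ) (hu : ∀ i ∈ α, 0 ≤ A.mulVec u i)
    (i : Fin N) (hi : i ∈ αi) (hmin : ∀ k, u i ≤ u k) :
    ∀ a ∈ αi ∪ βi, u a = u i := by
  classical
  set M := subm A αi αi with hM
  set B := subm A αi βi with hB
  set Minv := M⁻¹ with hMinv
  have hdet : IsUnit M.det := (Matrix.isUnit_iff_isUnit_det M).mp hunit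
  have hinv : Minv * M = 1 := Matrix.nonsing_inv_mul M hdet
  set uγ : ↥αi → ℝ := fun p => u p with huγdef
  set uδ : ↥βi → ℝ := fun q => u q with huδdef
  set f : ↥αi → ℝ := fun p => A.mulVec u p with hfdef
  have hf0 : ∀ p, 0 ≤ f p := fun p => hu p (hsub p.2)
  have eq1 : M.mulVec uγ + B.mulVec uδ = f := by
    funext p
    have hs := sum_split_aux adj A hz αi βi hdis hcl p p.2 u
    have e1 : ∑ q : ↥αi, A (p : Fin N) (q : Fin N) * u q = ∑ j ∈ αi, A p j * u j :=
      Finset.sum_coe_sort αi (fun j => A p j * u j)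
    have e2 : ∑ q : ↥βi, A (p : Fin N) (q : Fin N) * u q = ∑ j ∈ βi, A p j * u j :=
      Finset.sum_coe_sort βi (fun j => A p j * u j)
    simp only [Pi.add_apply, Matrix.mulVec, dotProduct, hM, hB, subm,
      Matrix.submatrix_apply, huγdef, huδdef, hfdef]
    rw [e1, e2, ← hs]
  have eq2 : M.mulVec (fun _ => 1) + B.mulVec (fun _ => 1) = 0 := by
    funext p
    have hs := sum_split_aux adj A hz αi βi hdis hcl p p.2 (fun _ => 1)
    have e1 : ∑ q : ↥αi, A (p : Fin N) (q : Fin N) * (1:ℝ) = ∑ j ∈ αi, A p j * 1 :=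
      Finset.sum_coe_sort αi (fun j => A p j * 1)
    have e2 : ∑ q : ↥βi, A (p : Fin N) (q : Fin N) * (1:ℝ) = ∑ j ∈ βi, A p j * 1 :=
      Finset.sum_coe_sort βi (fun j => A p j * 1)
    simp only [Pi.add_apply, Matrix.mulVec, dotProduct, hM, hB, subm,
      Matrix.submatrix_apply, Pi.zero_apply]
    rw [e1, e2, ← hs]
    simpa using hrow p
  set C := -(Minv * B) with hC
  have hCpos : ∀ p q, 0 < C p q := by
    intro p q
    have := hneg p q
    simp only [hC, Matrix.neg_apply]
    linarith
  have huγ : uγ = Minv.mulVec f + C.mulVec uδ := by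
    have h1 : Minv.mulVec (M.mulVec uγ + B.mulVec uδ) = Minv.mulVec f := by rw [eq1]
    rw [Matrix.mulVec_add, Matrix.mulVec_mulVec, Matrix.mulVec_mulVec, hinv,
      Matrix.one_mulVec] at h1
    rw [hC, Matrix.neg_mulVec, ← sub_eq_add_neg, eq_sub_iff_add_eq]
    exact h1
  have hCrow : ∀ p, ∑ q, C p q = 1 := by
    have h2 : Minv.mulVec (M.mulVec (fun _ => 1) + B.mulVec (fun _ => 1)) = 0 := by
      rw [eq2, Matrix.mulVec_zero]
    rw [Matrix.mulVec_add, Matrix.mulVec_mulVec, Matrix.mulVec_mulVec, hinv,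
      Matrix.one_mulVec] at h2
    intro p
    have h3 := congrFun h2 p
    simp only [Pi.add_apply, Pi.zero_apply, Matrix.mulVec, dotProduct, mul_one] at h3
    simp only [hC, Matrix.neg_apply]
    rw [Finset.sum_neg_distrib]
    linarith
  -- componentwise expression
  have hcomp : ∀ p : ↥αi, u p = (Minv.mulVec f) p + ∑ q, C p q * uδ q := by
    intro p
    have := congrFun huγ p
    simp only [Pi.add_apply, huγdef] at this
    rw [this]
    rfl
  have hMf_nonneg : ∀ p, 0 ≤ (Minv.mulVec f) p := by
    intro p
    simp only [Matrix.mulVec, dotProduct]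
    exact Finset.sum_nonneg fun q _ => mul_nonneg (hpos p q).le (hf0 q)
  set m := u i with hm
  have hlow : ∀ p : ↥αi, m ≤ ∑ q, C p q * uδ q := by
    intro p
    calc m = ∑ q, C p q * m := by rw [← Finset.sum_mul, hCrow p, one_mul]
    _ ≤ ∑ q, C p q * uδ q :=
      Finset.sum_le_sum fun q _ => mul_le_mul_of_nonneg_left (hmin q) (hCpos p q).le
  set iγ : ↥αi := ⟨i, hi⟩ with hiγ
  have hieq : m = (Minv.mulVec f) iγ + ∑ q, C iγ q * uδ q := hcomp iγ
  have hMf0 : (Minv.mulVec f) iγ = 0 := by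
    have := hlow iγ
    have := hMf_nonneg iγ
    linarith [hlow iγ]
  have hfzero : ∀ q, f q = 0 := by
    have hsum : ∑ q, Minv iγ q * f q = 0 := by
      have : (Minv.mulVec f) iγ = ∑ q, Minv iγ q * f q := by
        simp [Matrix.mulVec, dotProduct]
      linarith [hMf0, this]
    intro q
    have hterm := (Finset.sum_eq_zero_iff_of_nonneg
      (fun q _ => mul_nonneg (hpos iγ q).le (hf0 q))).mp hsum q (Finset.mem_univ q)
    rcases mul_eq_zero.mp hterm with h | h
    · exact absurd h (ne_of_gt (hpos iγ q))
    · exact h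
  have hMfall0 : ∀ p, (Minv.mulVec f) p = 0 := by
    intro p
    simp only [Matrix.mulVec, dotProduct]
    exact Finset.sum_eq_zero fun q _ => by rw [hfzero q, mul_zero]
  have hsumeq : ∑ q, C iγ q * uδ q = m := by linarith [hieq, hMf0]
  have hδ : ∀ q : ↥βi, uδ q = m := by
    intro q
    have hzero : ∑ q, C iγ q * (uδ q - m) = 0 := by
      have hexp : ∑ q, C iγ q * (uδ q - m)
          = (∑ q, C iγ q * uδ q) - (∑ q, C iγ q * m) := by
        rw [← Finset.sum_sub_distrib]
        exact Finset.sum_congr rfl fun q _ => by ring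
      rw [hexp, hsumeq, ← Finset.sum_mul, hCrow iγ, one_mul, sub_self]
    have hterm := (Finset.sum_eq_zero_iff_of_nonneg
      (fun r _ => mul_nonneg (hCpos iγ r).le
        (by simpa [huδdef] using sub_nonneg.mpr (hmin (r : Fin N))))).mp
      hzero q (Finset.mem_univ q)
    rcases mul_eq_zero.mp hterm with h | h
    · exact absurd h (ne_of_gt (hCpos iγ q))
    · linarith [sub_eq_zero.mp h]
  intro a ha
  rcases Finset.mem_union.mp ha with h | h
  · have hc := hcomp ⟨a, h⟩
    rw [hMfall0, zero_add] at hc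
    rw [hc]
    calc ∑ q, C ⟨a,h⟩ q * uδ q = ∑ q, C ⟨a,h⟩ q * m :=
          Finset.sum_congr rfl fun q _ => by rw [hδ q]
    _ = m := by rw [← Finset.sum_mul, hCrow, one_mul]
  · exact hδ ⟨a, h⟩

/-- Global strong discrete maximum principle sDMP-A (matrix–graph form). -/
theorem sDMP_A_global {N : ℕ} (hN : 2 ≤ N)
    (α β : Finset (Fin N)) (hdisj : Disjoint α β) (hunion : α ∪ β = Finset.univ)
    (hαne : α.Nonempty) (hβne : β.Nonempty)
    (adj : Fin N → Fin N → Prop) (hsym : Symmetric adj) (hirr : Irreflexive adj)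
    (A : Matrix (Fin N) (Fin N) ℝ)
    (hrow : ∀ i, ∑ j, A i j = 0)
    (hz : ∀ i j, i ≠ j → ¬ adj i j → A i j = 0)
    (hconn : AdjConnected adj α)
    (hbd : ∀ j ∈ β, ∃ i ∈ α, adj i j)
    (hloc : ∀ i ∈ α, ∃ αi βi : Finset (Fin N),
      αi ⊆ α ∧ βi.Nonempty ∧ Disjoint αi βi ∧ i ∈ αi ∧
      (∀ a ∈ αi, ∀ b, adj a b → b ∈ αi ∪ βi) ∧
      IsUnit (subm A αi αi) ∧
      (∀ p q, 0 < (subm A αi αi)⁻¹ p q) ∧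
      (∀ p q, ((subm A αi αi)⁻¹ * subm A αi βi) p q < 0)) :
    ∀ u : Fin N → ℝ, (∀ i ∈ α, 0 ≤ A.mulVec u i) →
      (∀ k, β.inf' hβne u ≤ u k) ∧
      ((∃ i ∈ α, ∀ k, u i ≤ u k) → ∀ k l, u k = u l) := by
  intro u hu
  have key : ∀ i ∈ α, (∀ k, u i ≤ u k) → ∀ k, u k = u i := by
    intro i hiα hmin
    have loc : ∀ i' ∈ α, u i' = u i → ∀ j, adj i' j → u j = u i := by
      intro i' hi' heq j hadj
      obtain ⟨αi, βi, hsub, hβine, hdis, hmem, hcl, hunit, hpos, hneg⟩ := hloc i' hi'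
      have hmin' : ∀ k, u i' ≤ u k := fun k => heq ▸ hmin k
      have hall := local_min_aux α adj A hrow hz αi βi hsub hdis hcl hunit hpos hneg
        u hu i' hmem hmin'
      rw [← heq]
      exact hall j (hcl i' hmem j hadj)
    have hαmin : ∀ j ∈ α, u j = u i := by
      intro j hj
      have hpath := hconn i hiα j hj
      clear hj
      induction hpath with
      | refl => rfl
      | tail hab hbc ih => exact loc _ hbc.1 ih _ hbc.2.2
    have hβmin : ∀ j ∈ β, u j = u i := by
      intro j hj
      obtain ⟨i', hi', hadj⟩ := hbd j hj
      exact loc i' hi' (hαmin i' hi') j hadj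
    intro k
    have hk : k ∈ α ∪ β := by rw [hunion]; exact Finset.mem_univ k
    rcases Finset.mem_union.mp hk with h | h
    · exact hαmin k h
    · exact hβmin k h
  constructor
  · intro k
    have hne : (Finset.univ : Finset (Fin N)).Nonempty := by
      exact ⟨⟨0, by omega⟩, Finset.mem_univ _⟩
    obtain ⟨i0, -, h0⟩ := Finset.exists_min_image Finset.univ u hne
    have hmin0 : ∀ k, u i0 ≤ u k := fun k => h0 k (Finset.mem_univ k)
    by_cases hc : i0 ∈ β
    · exact le_trans (Finset.inf'_le _ hc) (hmin0 k)
    · have hi0 : i0 ∈ α ∪ β := by rw [hunion]; exact Finset.mem_univ i0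
      have hi0α : i0 ∈ α := by
        rcases Finset.mem_union.mp hi0 with h | h
        · exact h
        · exact absurd h hc
      have hconst := key i0 hi0α hmin0
      have hβne' := hβne
      obtain ⟨j, hj⟩ := hβne'
      calc β.inf' hβne u ≤ u j := Finset.inf'_le _ hj
        _ = u i0 := hconst j
        _ ≤ u k := hmin0 k
  · rintro ⟨i, hiα, hmin⟩ k l
    rw [key i hiα hmin k, key i hiα hmin l]
end

section
/- Let N ≥ 2, let {α, β} be a partition of {1,…,N} into nonempty sets, let ~ be an adjacency relation on {1,…,N}, let A be a real N×N matrix with all row sums zero and A_{ij} = 0 whenever i ≠ j and i is not ~-adjacent to j, and let C be an entrywise nonnegative real N×N matrix with C_{ij} = 0 whenever i ≠ j and i is not ~-adjacent to j. Assume: (a) α is ~-connected; (b) every j ∈ β is ~-adjacent to some i ∈ α; (c) for every i ∈ α there exist disjoint sets α_i ⊆ α and nonempty β_i ⊆ {1,…,N} such that i ∈ α_i, every index ~-adjacent to an element of α_i lies in α_i ∪ β_i, the matrix (A+C)_{α_iα_i} is invertible with entrywise positive inverse, and (A+C)_{α_iα_i}^{-1} (A+C)_{α_iβ_i} is entrywise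 negative. Then for every u ∈ ℝ^N with ((A+C)u)_i ≥ 0 for all i ∈ α: min_{1≤k≤N} u_k ≥ −max_{j∈β} u_j⁻; and if u attains a nonpositive minimum over all of {1,…,N} at some index in α, then u is constant. -/
open Matrix Finset

lemma mulVec_split {N : ℕ} (M : Matrix (Fin N) (Fin N) ℝ)
    (γ δ : Finset (Fin N)) (hd : Disjoint γ δ)
    (u : Fin N → ℝ) (a : ↥γ)
    (hz : ∀ j, j ∉ γ → j ∉ δ → M a.val j = 0) :
    M.mulVec u a.val =
      (subm M γ γ).mulVec (fun p => u p.val) a +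
      (subm M γ δ).mulVec (fun q => u q.val) a := by
  have h1 : (subm M γ γ).mulVec (fun p => u p.val) a = ∑ j ∈ γ, M a.val j * u j := by
    simp only [subm, Matrix.mulVec, dotProduct, Matrix.submatrix_apply]
    exact Finset.sum_coe_sort γ (fun j => M a.val j * u j)
  have h2 : (subm M γ δ).mulVec (fun q => u q.val) a = ∑ j ∈ δ, M a.val j * u j := by
    simp only [subm, Matrix.mulVec, dotProduct, Matrix.submatrix_apply]
    exact Finset.sum_coe_sort δ (fun j => M a.val j * u j)
  have h3 : M.mulVec u a.val = ∑ j ∈ γ ∪ δ, M a.val j * u j := by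
    show ∑ j, M a.val j * u j = _
    rw [← Finset.sum_subset (Finset.subset_univ (γ ∪ δ))]
    intro x _ hx
    rw [Finset.mem_union] at hx
    push_neg at hx
    rw [hz x hx.1 hx.2, zero_mul]
  rw [h1, h2, h3, Finset.sum_union hd]

lemma solve_sub {n m : Type*} [Fintype n] [Fintype m] [DecidableEq n]
    (B : Matrix n n ℝ) (D : Matrix n m ℝ) (hdet : IsUnit B.det)
    (x : n → ℝ) (y : m → ℝ) (g : n → ℝ)
    (h : ∀ a, B.mulVec x a + D.mulVec y a = g a) :
    ∀ a, x a = B⁻¹.mulVec g a - (B⁻¹ * D).mulVec y a := by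
  have h2 : B.mulVec x = g - D.mulVec y := by
    funext a; have := h a; simp [Pi.sub_apply]; linarith
  have : x = B⁻¹.mulVec g - (B⁻¹ * D).mulVec y := by
    calc x = (B⁻¹ * B).mulVec x := by rw [Matrix.nonsing_inv_mul B hdet, Matrix.one_mulVec]
    _ = B⁻¹.mulVec (B.mulVec x) := by rw [← Matrix.mulVec_mulVec]
    _ = B⁻¹.mulVec (g - D.mulVec y) := by rw [h2]
    _ = B⁻¹.mulVec g - B⁻¹.mulVec (D.mulVec y) := by rw [Matrix.mulVec_sub]
    _ = B⁻¹.mulVec g - (B⁻¹ * D).mulVec y := by rw [Matrix.mulVec_mulVec]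
  intro a; rw [this]; simp

lemma local_const {N : ℕ}
    (α : Finset (Fin N)) (adj : Fin N → Fin N → Prop)
    (A C : Matrix (Fin N) (Fin N) ℝ)
    (hrow : ∀ i, ∑ j, A i j = 0)
    (hC : ∀ i j, 0 ≤ C i j)
    (hzM : ∀ i j, i ≠ j → ¬ adj i j → (A + C) i j = 0)
    (αi βi : Finset (Fin N)) (hsub : αi ⊆ α) (hdij : Disjoint αi βi)
    (hcl : ∀ a ∈ αi, ∀ b, adj a b → b ∈ αi ∪ βi)
    (hUnit : IsUnit (subm (A + C) αi αi))
    (hPos : ∀ p q, 0 < (subm (A + C) αi αi)⁻¹ p q)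
    (hNeg : ∀ p q, ((subm (A + C) αi αi)⁻¹ * subm (A + C) αi βi) p q < 0)
    (u : Fin N → ℝ) (hu : ∀ i ∈ α, 0 ≤ (A + C).mulVec u i)
    (i : Fin N) (hiαi : i ∈ αi) (hle : u i ≤ 0) (hmin : ∀ k, u i ≤ u k) :
    ∀ b ∈ αi ∪ βi, u b = u i := by
  set M := A + C with hMdef
  set B := subm M αi αi with hB
  set D := subm M αi βi with hD
  have hdet : IsUnit B.det := (Matrix.isUnit_iff_isUnit_det B).mp hUnit
  set m := u i with hm
  set w : ↥βi → ℝ := fun q => u q.val with hw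
  set f' : ↥αi → ℝ := fun a => M.mulVec u a.val with hf'
  set c' : ↥αi → ℝ := fun a => M.mulVec (fun _ => (1:ℝ)) a.val with hc'
  have hz : ∀ a : ↥αi, ∀ j, j ∉ αi → j ∉ βi → M a.val j = 0 := by
    intro a j hj1 hj2
    have hne : (a : Fin N) ≠ j := fun h => hj1 (h ▸ a.property)
    have hnadj : ¬ adj a.val j := fun h => by
      rcases Finset.mem_union.mp (hcl a.val a.property j h) with h' | h'
      · exact hj1 h'
      · exact hj2 h'
    exact hzM _ _ hne hnadj
  have split_u : ∀ a : ↥αi, B.mulVec (fun p => u p.val) a + D.mulVec w a = f' a :=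
    fun a => (mulVec_split M αi βi hdij u a (hz a)).symm
  have split_1 : ∀ a : ↥αi,
      B.mulVec (fun _ => (1:ℝ)) a + D.mulVec (fun _ => (1:ℝ)) a = c' a :=
    fun a => (mulVec_split M αi βi hdij (fun _ => 1) a (hz a)).symm
  have hv : ∀ a : ↥αi, u a.val = B⁻¹.mulVec f' a - (B⁻¹ * D).mulVec w a :=
    solve_sub B D hdet (fun p => u p.val) w f' split_u
  have h1 : ∀ a : ↥αi, (1:ℝ) = B⁻¹.mulVec c' a - (B⁻¹ * D).mulVec (fun _ => 1) a :=
    solve_sub B D hdet (fun _ => 1) (fun _ => 1) c' split_1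
  set P : ↥αi → ℝ := fun a => B⁻¹.mulVec f' a with hP
  set Q : ↥αi → ℝ := fun a => B⁻¹.mulVec c' a with hQ
  -- nonnegativity facts
  have hf'0 : ∀ p : ↥αi, 0 ≤ f' p := fun p => hu p.val (hsub p.property)
  have hc'0 : ∀ p : ↥αi, 0 ≤ c' p := by
    intro p
    have : c' p = ∑ j, C p.val j := by
      simp only [hc', hMdef, Matrix.mulVec, dotProduct, Matrix.add_apply, mul_one]
      rw [Finset.sum_add_distrib, hrow p.val, zero_add]
    rw [this]
    exact Finset.sum_nonneg fun j _ => hC _ j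
  have hP0 : ∀ a, 0 ≤ P a := by
    intro a
    apply Finset.sum_nonneg
    intro p _
    exact mul_nonneg (le_of_lt (hPos a p)) (hf'0 p)
  have hQ0 : ∀ a, 0 ≤ Q a := by
    intro a
    apply Finset.sum_nonneg
    intro p _
    exact mul_nonneg (le_of_lt (hPos a p)) (hc'0 p)
  -- decomposition
  have decomp : ∀ a : ↥αi,
      u a.val - m = P a + (∑ q, (-((B⁻¹ * D) a q)) * (w q - m)) + (-m) * Q a := by
    intro a
    have e1 := hv a
    have e2 := h1 a
    have s1 : (B⁻¹ * D).mulVec w a = ∑ q, (B⁻¹ * D) a q * w q := rfl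
    have s2 : (B⁻¹ * D).mulVec (fun _ => (1:ℝ)) a = ∑ q, (B⁻¹ * D) a q := by
      simp [Matrix.mulVec, dotProduct]
    have e3 : ∑ q, (-((B⁻¹ * D) a q)) * (w q - m)
        = m * (∑ q, (B⁻¹ * D) a q) - ∑ q, (B⁻¹ * D) a q * w q := by
      rw [Finset.mul_sum, ← Finset.sum_sub_distrib]
      apply Finset.sum_congr rfl
      intro q _
      ring
    rw [s1] at e1
    rw [s2] at e2
    rw [e3]
    have hPa : P a = (B⁻¹ *ᵥ f') a := rfl
    have hQa : Q a = (B⁻¹ *ᵥ c') a := rfl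
    rw [hPa, hQa]
    linear_combination e1 - m * e2
  have ht2nn : ∀ a : ↥αi, ∀ q : ↥βi, 0 ≤ (-((B⁻¹ * D) a q)) * (w q - m) := by
    intro a q
    exact mul_nonneg (by linarith [hNeg a q]) (by simp [hw, hm]; exact hmin q.val)
  set a0 : ↥αi := ⟨i, hiαi⟩ with ha0
  have hd0 : u (a0 : Fin N) - m = 0 := by simp [ha0, hm]
  have hsum2nn : ∀ a : ↥αi, 0 ≤ ∑ q, (-((B⁻¹ * D) a q)) * (w q - m) :=
    fun a => Finset.sum_nonneg fun q _ => ht2nn a q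
  have ht3nn : ∀ a : ↥αi, 0 ≤ (-m) * Q a := fun a =>
    mul_nonneg (by linarith) (hQ0 a)
  -- at a0, all three terms vanish
  have hz1 : P a0 = 0 := by have := decomp a0; nlinarith [hP0 a0, hsum2nn a0, ht3nn a0]
  have hz2 : ∑ q, (-((B⁻¹ * D) a0 q)) * (w q - m) = 0 := by
    have := decomp a0; nlinarith [hP0 a0, hsum2nn a0, ht3nn a0]
  have hz3 : (-m) * Q a0 = 0 := by
    have := decomp a0; nlinarith [hP0 a0, hsum2nn a0, ht3nn a0]
  -- consequences
  have hwm : ∀ q : ↥βi, w q = m := by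
    intro q
    have := (Finset.sum_eq_zero_iff_of_nonneg (fun q _ => ht2nn a0 q)).mp hz2 q (Finset.mem_univ q)
    have hE := hNeg a0 q
    have hwq : w q - m = 0 := by
      rcases mul_eq_zero.mp this with h | h
      · exfalso; linarith
      · exact h
    linarith
  have hf'z : ∀ p : ↥αi, f' p = 0 := by
    intro p
    have hz1' : ∑ p, B⁻¹ a0 p * f' p = 0 := hz1
    have := (Finset.sum_eq_zero_iff_of_nonneg
      (fun p _ => mul_nonneg (le_of_lt (hPos a0 p)) (hf'0 p))).mp hz1' p (Finset.mem_univ p)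
    rcases mul_eq_zero.mp this with h | h
    · exact absurd h (ne_of_gt (hPos a0 p))
    · exact h
  have hPz : ∀ a : ↥αi, P a = 0 := by
    intro a
    show ∑ p, B⁻¹ a p * f' p = 0
    exact Finset.sum_eq_zero fun p _ => by rw [hf'z p, mul_zero]
  have ht3z : ∀ a : ↥αi, (-m) * Q a = 0 := by
    rcases mul_eq_zero.mp hz3 with h | h
    · intro a; rw [h, zero_mul]
    · -- Q a0 = 0 forces c' = 0, hence Q a = 0
      have hc'z : ∀ p : ↥αi, c' p = 0 := by
        intro p
        have hz' : ∑ p, B⁻¹ a0 p * c' p = 0 := h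
        have := (Finset.sum_eq_zero_iff_of_nonneg
          (fun p _ => mul_nonneg (le_of_lt (hPos a0 p)) (hc'0 p))).mp hz' p (Finset.mem_univ p)
        rcases mul_eq_zero.mp this with h' | h'
        · exact absurd h' (ne_of_gt (hPos a0 p))
        · exact h'
      intro a
      have : Q a = 0 := Finset.sum_eq_zero fun p _ => by rw [hc'z p, mul_zero]
      rw [this, mul_zero]
  have hαm : ∀ a : ↥αi, u a.val = m := by
    intro a
    have hd := decomp a
    have : ∑ q, (-((B⁻¹ * D) a q)) * (w q - m) = 0 :=
      Finset.sum_eq_zero fun q _ => by rw [hwm q, sub_self, mul_zero]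
    rw [hPz a, this, ht3z a] at hd
    linarith
  intro b hb
  rcases Finset.mem_union.mp hb with h | h
  · exact hαm ⟨b, h⟩
  · exact hwm ⟨b, h⟩

/-- Global strong discrete maximum principle sDMP-B (matrix–graph form),
for a stiffness matrix `A` plus an entrywise nonnegative reaction matrix `C`. -/
theorem sDMP_B_global {N : ℕ} (hN : 2 ≤ N)
    (α β : Finset (Fin N)) (hdisj : Disjoint α β) (hunion : α ∪ β = Finset.univ)
    (hαne : α.Nonempty) (hβne : β.Nonempty)
    (adj : Fin N → Fin N → Prop) (hsym : Symmetric adj) (hirr : Irreflexive adj)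
    (A C : Matrix (Fin N) (Fin N) ℝ)
    (hrow : ∀ i, ∑ j, A i j = 0)
    (hzA : ∀ i j, i ≠ j → ¬ adj i j → A i j = 0)
    (hC : ∀ i j, 0 ≤ C i j)
    (hzC : ∀ i j, i ≠ j → ¬ adj i j → C i j = 0)
    (hconn : AdjConnected adj α)
    (hbd : ∀ j ∈ β, ∃ i ∈ α, adj i j)
    (hloc : ∀ i ∈ α, ∃ αi βi : Finset (Fin N),
      αi ⊆ α ∧ βi.Nonempty ∧ Disjoint αi βi ∧ i ∈ αi ∧
      (∀ a ∈ αi, ∀ b, adj a b → b ∈ αi ∪ βi) ∧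
      IsUnit (subm (A + C) αi αi) ∧
      (∀ p q, 0 < (subm (A + C) αi αi)⁻¹ p q) ∧
      (∀ p q, ((subm (A + C) αi αi)⁻¹ * subm (A + C) αi βi) p q < 0)) :
    ∀ u : Fin N → ℝ, (∀ i ∈ α, 0 ≤ (A + C).mulVec u i) →
      (∀ k, -(β.sup' hβne fun j => max (-(u j)) 0) ≤ u k) ∧
      ((∃ i ∈ α, u i ≤ 0 ∧ ∀ k, u i ≤ u k) → ∀ k l, u k = u l) := by
  intro u hu
  have hzM : ∀ i j, i ≠ j → ¬ adj i j → (A + C) i j = 0 := by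
    intro i j h1 h2
    simp [Matrix.add_apply, hzA i j h1 h2, hzC i j h1 h2]
  -- neighbor step: if the min (≤ 0) is attained at a point of α, it is attained at
  -- every neighbor
  have step : ∀ i ∈ α, u i ≤ 0 → (∀ k, u i ≤ u k) → ∀ b, adj i b → u b = u i := by
    intro i hiα hle hmin b hadj
    obtain ⟨αi, βi, hsub, _, hdij, hiαi, hcl, hUnit, hPos, hNeg⟩ := hloc i hiα
    exact local_const α adj A C hrow hC hzM αi βi hsub hdij hcl hUnit hPos hNeg
      u hu i hiαi hle hmin b (hcl i hiαi b hadj)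
  -- constancy from a nonpositive interior minimum
  have const_of : ∀ i ∈ α, u i ≤ 0 → (∀ k, u i ≤ u k) → ∀ k, u k = u i := by
    intro i hiα hle hmin
    have hα : ∀ j ∈ α, u j = u i := by
      have key : ∀ j, Relation.ReflTransGen (fun a b => a ∈ α ∧ b ∈ α ∧ adj a b) i j →
          u j = u i := by
        intro j hpath
        induction hpath with
        | refl => rfl
        | tail _ hrel ih =>
          obtain ⟨hbα, hcα, hadj⟩ := hrel
          have hb : u _ = u i := ih
          have := step _ hbα (by rw [hb]; exact hle)
            (by intro k; rw [hb]; exact hmin k) _ hadj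
          rw [this, hb]
      exact fun j hjα => key j (hconn i hiα j hjα)
    intro k
    have hk : k ∈ α ∪ β := by rw [hunion]; exact Finset.mem_univ k
    rcases Finset.mem_union.mp hk with h | h
    · exact hα k h
    · obtain ⟨a, haα, hadj⟩ := hbd k h
      have ha : u a = u i := hα a haα
      have := step a haα (by rw [ha]; exact hle) (by intro k'; rw [ha]; exact hmin k') k hadj
      rw [this, ha]
  constructor
  · -- lower bound
    intro k
    obtain ⟨k0, _, hk0⟩ := Finset.exists_min_image Finset.univ u
      ⟨⟨0, by omega⟩, Finset.mem_univ _⟩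
    have hk0min : ∀ l, u k0 ≤ u l := fun l => hk0 l (Finset.mem_univ l)
    have hMnn : 0 ≤ β.sup' hβne fun j => max (-(u j)) 0 := by
      obtain ⟨j, hj⟩ := hβne
      exact le_trans (le_max_right (-(u j)) 0) (Finset.le_sup' (fun j => max (-(u j)) 0) hj)
    rcases le_or_gt 0 (u k0) with h0 | h0
    · linarith [hk0min k]
    · -- negative minimum; it is attained at some point of β
      have hβval : ∃ j ∈ β, u j = u k0 := by
        have hk0mem : k0 ∈ α ∪ β := by rw [hunion]; exact Finset.mem_univ k0
        rcases Finset.mem_union.mp hk0mem with h | h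
        · obtain ⟨j, hj⟩ := hβne
          exact ⟨j, hj, const_of k0 h (le_of_lt h0) hk0min j⟩
        · exact ⟨k0, h, rfl⟩
      obtain ⟨j, hjβ, hj⟩ := hβval
      have : -(u j) ≤ β.sup' hβne fun j => max (-(u j)) 0 :=
        le_trans (le_max_left _ 0) (Finset.le_sup' (fun j => max (-(u j)) 0) hjβ)
      have := neg_le_neg this
      rw [neg_neg] at this
      calc -(β.sup' hβne fun j => max (-(u j)) 0) ≤ u j := this
        _ = u k0 := hj
        _ ≤ u k := hk0min k
  · rintro ⟨i, hiα, hle, hmin⟩ k l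
    rw [const_of i hiα hle hmin k, const_of i hiα hle hmin l]
end

section
/- Let N ≥ 2, let {α, β} be a partition of {1,…,N} into nonempty sets, let ~ be an adjacency relation on {1,…,N}, let A be a real N×N matrix with all row sums zero and A_{ij} = 0 whenever i ≠ j and i is not ~-adjacent to j, and let C be an entrywise nonpositive real N×N matrix with C_{ij} = 0 whenever i ≠ j and i is not ~-adjacent to j. Assume: (a) α is ~-connected; (b) every j ∈ β is ~-adjacent to some i ∈ α; (c) for every i ∈ α there exist disjoint sets α_i ⊆ α and nonempty β_i ⊆ {1,…,N} such that i ∈ α_i, every index ~-adjacent to an element of α_i lies in α_i ∪ β_i, the matrix (A+C)_{α_iα_i} is invertible with entrywise positive inverse, and (A+C)_{α_iα_i}^{-1} (A+C)_{α_iβ_i} is entrywise negative. Then for every entrywise nonnegative u ∈ ℝ^N with ((A+C)u)_i ≥ 0 for all i ∈ α: min_{1≤k≤N} u_k ≥ min_{j∈β} u_j; and if the minimum of u over all of {1,…,N} is attained at some index in α, then u is constant. -/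
open Matrix Finset

/-- Local step: if the global minimum `m` of `u` is attained at `i ∈ αi`, then `u = m`
on all of `αi ∪ βi`. -/
lemma key_local {N : ℕ} (adj : Fin N → Fin N → Prop)
    (A C : Matrix (Fin N) (Fin N) ℝ)
    (hrow : ∀ i, ∑ j, A i j = 0)
    (hzA : ∀ i j, i ≠ j → ¬ adj i j → A i j = 0)
    (hC : ∀ i j, C i j ≤ 0)
    (hzC : ∀ i j, i ≠ j → ¬ adj i j → C i j = 0)
    (αi βi : Finset (Fin N)) (hdis : Disjoint αi βi)
    (hnbr : ∀ a ∈ αi, ∀ b, adj a b → b ∈ αi ∪ βi)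
    (hunit : IsUnit (subm (A + C) αi αi))
    (hinvpos : ∀ p q, 0 < (subm (A + C) αi αi)⁻¹ p q)
    (hQneg : ∀ p q, ((subm (A + C) αi αi)⁻¹ * subm (A + C) αi βi) p q < 0)
    (u : Fin N → ℝ) (m : ℝ) (hm0 : 0 ≤ m) (hmle : ∀ k, m ≤ u k)
    (hposu : ∀ a ∈ αi, 0 ≤ (A + C).mulVec u a)
    (i : Fin N) (hiαi : i ∈ αi) (hui : u i = m) :
    ∀ j ∈ αi ∪ βi, u j = m := by
  classical
  set M : Matrix ↥αi ↥αi ℝ := subm (A + C) αi αi with hMdef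
  set Bm : Matrix ↥αi ↥βi ℝ := subm (A + C) αi βi with hBdef
  have hdet : IsUnit M.det := (Matrix.isUnit_iff_isUnit_det M).mp hunit
  have hMinvM : M⁻¹ * M = 1 := Matrix.nonsing_inv_mul M hdet
  have hzero : ∀ (a : ↥αi) (j : Fin N), j ∉ αi ∪ βi → (A + C) (a : Fin N) j = 0 := by
    intro a j hj
    have hne : (a : Fin N) ≠ j := by rintro rfl; exact hj (Finset.mem_union_left _ a.2)
    have hnadj : ¬ adj a j := fun h => hj (hnbr a a.2 j h)
    simp [Matrix.add_apply, hzA _ _ hne hnadj, hzC _ _ hne hnadj]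
  have hsplit : ∀ (x : Fin N → ℝ) (a : ↥αi),
      (A + C).mulVec x a = M.mulVec (fun p => x p) a + Bm.mulVec (fun q => x q) a := by
    intro x a
    simp only [Matrix.mulVec, dotProduct, hMdef, hBdef, subm, Matrix.submatrix_apply]
    rw [Finset.sum_coe_sort αi (fun j => (A + C) (a : Fin N) j * x j),
      Finset.sum_coe_sort βi (fun j => (A + C) (a : Fin N) j * x j),
      ← Finset.sum_union hdis]
    exact (Finset.sum_subset (Finset.subset_univ _)
      (fun j _ hj => by rw [hzero a j hj, zero_mul])).symm
  set v : ↥αi → ℝ := fun p => u p with hvdef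
  set w : ↥βi → ℝ := fun q => u q with hwdef
  set G : ↥αi → ℝ := fun a => (A + C).mulVec u a with hGdef
  have hGnn : ∀ a, 0 ≤ G a := fun a => hposu a a.2
  have hMv : M.mulVec v = G - Bm.mulVec w := by
    funext a
    have h := hsplit u a
    simp only [Pi.sub_apply, hGdef]
    linarith
  have hv : v = M⁻¹.mulVec G - (M⁻¹ * Bm).mulVec w := by
    have h2 : M⁻¹.mulVec (M.mulVec v) = v := by
      rw [Matrix.mulVec_mulVec, hMinvM, Matrix.one_mulVec]
    rw [← h2, hMv, Matrix.mulVec_sub, Matrix.mulVec_mulVec]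
  -- constant-one vector relation
  set c : ↥αi → ℝ := fun a => ∑ j, C (a : Fin N) j with hcdef
  have hcv : ∀ a : ↥αi, (A + C).mulVec (fun _ => (1 : ℝ)) a = c a := by
    intro a
    simp [Matrix.mulVec, dotProduct, Matrix.add_apply, Finset.sum_add_distrib,
      hrow (a : Fin N), hcdef]
  have hM1 : M.mulVec (fun _ => (1 : ℝ)) = c - Bm.mulVec (fun _ => (1 : ℝ)) := by
    funext a
    have h := hsplit (fun _ => (1 : ℝ)) a
    rw [hcv a] at h
    simp only [Pi.sub_apply]
    linarith
  have h1v : (fun _ : ↥αi => (1 : ℝ)) =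
      M⁻¹.mulVec c - (M⁻¹ * Bm).mulVec (fun _ => (1 : ℝ)) := by
    have h2 : M⁻¹.mulVec (M.mulVec (fun _ => (1 : ℝ))) = fun _ => (1 : ℝ) := by
      rw [Matrix.mulVec_mulVec, hMinvM, Matrix.one_mulVec]
    rw [← h2, hM1, Matrix.mulVec_sub, Matrix.mulVec_mulVec]
  set Pm : Matrix ↥αi ↥βi ℝ := -(M⁻¹ * Bm) with hPdef
  have hP : ∀ a r, 0 < Pm a r := by
    intro a r
    simp only [hPdef, Matrix.neg_apply]
    linarith [hQneg a r]
  have hexpand : ∀ a : ↥αi, v a = (∑ b, M⁻¹ a b * G b) + ∑ r, Pm a r * w r := by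
    intro a
    have h := congrFun hv a
    simp only [Pi.sub_apply, Matrix.mulVec, dotProduct] at h
    rw [h]
    rw [show (∑ r, Pm a r * w r) = -∑ r, (M⁻¹ * Bm) a r * w r by
      rw [← Finset.sum_neg_distrib]; exact Finset.sum_congr rfl fun r _ => by
        simp [hPdef, Matrix.neg_apply, neg_mul]]
    ring
  have h1expand : ∀ a : ↥αi, (1 : ℝ) = (∑ b, M⁻¹ a b * c b) + ∑ r, Pm a r := by
    intro a
    have h := congrFun h1v a
    simp only [Pi.sub_apply, Matrix.mulVec, dotProduct, mul_one] at h
    have hns : (∑ r, Pm a r) = -∑ r, (M⁻¹ * Bm) a r := by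
      rw [← Finset.sum_neg_distrib]
      exact Finset.sum_congr rfl fun r _ => by simp [hPdef, Matrix.neg_apply]
    rw [hns]
    linarith
  have hc_np : ∀ b : ↥αi, c b ≤ 0 := fun b => Finset.sum_nonpos fun j _ => hC _ j
  have hT1 : ∀ a : ↥αi, (∑ b, M⁻¹ a b * c b) ≤ 0 := fun a =>
    Finset.sum_nonpos fun b _ => mul_nonpos_of_nonneg_of_nonpos (hinvpos a b).le (hc_np b)
  have hSge1 : ∀ a : ↥αi, 1 ≤ ∑ r, Pm a r := by
    intro a
    have h := h1expand a
    linarith [hT1 a]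
  set i' : ↥αi := ⟨i, hiαi⟩ with hi'def
  have hvi : v i' = m := hui
  have hwge : ∀ r : ↥βi, m ≤ w r := fun r => hmle r
  have hTnn : 0 ≤ ∑ b, M⁻¹ i' b * G b :=
    Finset.sum_nonneg fun b _ => mul_nonneg (hinvpos i' b).le (hGnn b)
  have hWm : (∑ r, Pm i' r) * m ≤ ∑ r, Pm i' r * w r := by
    rw [Finset.sum_mul]
    exact Finset.sum_le_sum fun r _ => mul_le_mul_of_nonneg_left (hwge r) (hP i' r).le
  have hmS : m ≤ (∑ r, Pm i' r) * m := by
    nlinarith [hSge1 i']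
  have hEi := hexpand i'
  rw [hvi] at hEi
  have hT0 : (∑ b, M⁻¹ i' b * G b) = 0 := by linarith
  have hW : (∑ r, Pm i' r * w r) = m := by linarith
  have hSm : (∑ r, Pm i' r) * m = m := by linarith
  have hG0 : ∀ b, G b = 0 := by
    intro b
    have h := (Finset.sum_eq_zero_iff_of_nonneg
      (fun b _ => mul_nonneg (hinvpos i' b).le (hGnn b))).mp hT0 b (Finset.mem_univ b)
    exact (mul_eq_zero.mp h).resolve_left (ne_of_gt (hinvpos i' b))
  have hweq : ∀ r, w r = m := by
    have hz : ∑ r, Pm i' r * (w r - m) = 0 := by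
      have hrw : ∑ r, Pm i' r * (w r - m)
          = (∑ r, Pm i' r * w r) - (∑ r, Pm i' r) * m := by
        rw [Finset.sum_mul, ← Finset.sum_sub_distrib]
        exact Finset.sum_congr rfl fun r _ => by ring
      rw [hrw, hW, hSm, sub_self]
    intro r
    have h := (Finset.sum_eq_zero_iff_of_nonneg
      (fun r _ => mul_nonneg (hP i' r).le (by linarith [hwge r]))).mp hz r (Finset.mem_univ r)
    have h2 := (mul_eq_zero.mp h).resolve_left (ne_of_gt (hP i' r))
    linarith
  have hTa0 : ∀ a : ↥αi, (∑ b, M⁻¹ a b * G b) = 0 := by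
    intro a
    exact Finset.sum_eq_zero fun b _ => by rw [hG0 b, mul_zero]
  have hveq : ∀ a : ↥αi, v a = m := by
    by_cases hm : m = 0
    · intro a
      have h := hexpand a
      rw [hTa0 a] at h
      have : ∑ r, Pm a r * w r = 0 :=
        Finset.sum_eq_zero fun r _ => by rw [hweq r, hm, mul_zero]
      rw [this] at h
      rw [h, hm]; norm_num
    · have hS1 : (∑ r, Pm i' r) = 1 := by
        have := mul_right_cancel₀ hm (hSm.trans (one_mul m).symm)
        exact this
      have hTc0 : (∑ b, M⁻¹ i' b * c b) = 0 := by
        have h := h1expand i'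
        rw [hS1] at h
        linarith
      have hc0 : ∀ b, c b = 0 := by
        intro b
        have h := (Finset.sum_eq_zero_iff_of_nonpos
          (fun b _ => mul_nonpos_of_nonneg_of_nonpos (hinvpos i' b).le (hc_np b))).mp
          hTc0 b (Finset.mem_univ b)
        exact (mul_eq_zero.mp h).resolve_left (ne_of_gt (hinvpos i' b))
      have hSa1 : ∀ a : ↥αi, (∑ r, Pm a r) = 1 := by
        intro a
        have h := h1expand a
        have hz : (∑ b, M⁻¹ a b * c b) = 0 :=
          Finset.sum_eq_zero fun b _ => by rw [hc0 b, mul_zero]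
        rw [hz] at h
        linarith
      intro a
      have h := hexpand a
      rw [hTa0 a] at h
      have hsum : ∑ r, Pm a r * w r = m := by
        calc ∑ r, Pm a r * w r = ∑ r, Pm a r * m :=
              Finset.sum_congr rfl fun r _ => by rw [hweq r]
          _ = (∑ r, Pm a r) * m := by rw [Finset.sum_mul]
          _ = m := by rw [hSa1 a, one_mul]
      rw [hsum] at h
      linarith
  intro j hj
  rcases Finset.mem_union.mp hj with h | h
  · exact hveq ⟨j, h⟩
  · exact hweq ⟨j, h⟩

/-- Global restricted strong discrete maximum principle sDMP-R (matrix–graph form),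
for a stiffness matrix `A` plus an entrywise nonpositive reaction matrix `C`,
asserted for entrywise nonnegative solutions. -/
theorem sDMP_R_global {N : ℕ} (hN : 2 ≤ N)
    (α β : Finset (Fin N)) (hdisj : Disjoint α β) (hunion : α ∪ β = Finset.univ)
    (hαne : α.Nonempty) (hβne : β.Nonempty)
    (adj : Fin N → Fin N → Prop) (hsym : Symmetric adj) (hirr : Irreflexive adj)
    (A C : Matrix (Fin N) (Fin N) ℝ)
    (hrow : ∀ i, ∑ j, A i j = 0)
    (hzA : ∀ i j, i ≠ j → ¬ adj i j → A i j = 0)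
    (hC : ∀ i j, C i j ≤ 0)
    (hzC : ∀ i j, i ≠ j → ¬ adj i j → C i j = 0)
    (hconn : AdjConnected adj α)
    (hbd : ∀ j ∈ β, ∃ i ∈ α, adj i j)
    (hloc : ∀ i ∈ α, ∃ αi βi : Finset (Fin N),
      αi ⊆ α ∧ βi.Nonempty ∧ Disjoint αi βi ∧ i ∈ αi ∧
      (∀ a ∈ αi, ∀ b, adj a b → b ∈ αi ∪ βi) ∧
      IsUnit (subm (A + C) αi αi) ∧
      (∀ p q, 0 < (subm (A + C) αi αi)⁻¹ p q) ∧
      (∀ p q, ((subm (A + C) αi αi)⁻¹ * subm (A + C) αi βi) p q < 0)) :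
    ∀ u : Fin N → ℝ, (∀ k, 0 ≤ u k) → (∀ i ∈ α, 0 ≤ (A + C).mulVec u i) →
      (∀ k, β.inf' hβne u ≤ u k) ∧
      ((∃ i ∈ α, ∀ k, u i ≤ u k) → ∀ k l, u k = u l) := by
  intro u hu hAu
  have huniv : (Finset.univ : Finset (Fin N)).Nonempty := by
    obtain ⟨a0, ha0⟩ := hαne
    exact ⟨a0, Finset.mem_univ a0⟩
  set m := Finset.inf' Finset.univ huniv u with hmdef
  have hmle : ∀ k, m ≤ u k := fun k => Finset.inf'_le u (Finset.mem_univ k)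
  obtain ⟨k0, _, hk0e⟩ := Finset.exists_mem_eq_inf' huniv u
  have hmk0 : m = u k0 := hmdef.trans hk0e
  have hm0 : 0 ≤ m := hmk0 ▸ hu k0
  have spread : ∀ i ∈ α, u i = m → ∀ j, adj i j → u j = m := by
    intro i hi hui j hadj
    obtain ⟨αi, βi, hsubα, hβine, hdis, hiαi, hnbr, hunit, hinvpos, hQneg⟩ := hloc i hi
    exact key_local adj A C hrow hzA hC hzC αi βi hdis hnbr hunit hinvpos hQneg
      u m hm0 hmle (fun a ha => hAu a (hsubα ha)) i hiαi hui j (hnbr i hiαi j hadj)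
  have key : ∀ i ∈ α, u i = m → ∀ k, u k = m := by
    intro i hi hui
    have hα_all : ∀ k ∈ α, u k = m := by
      intro k hk
      have hpath := hconn i hi k hk
      clear hk
      induction hpath with
      | refl => exact hui
      | tail _ hbc ih =>
        exact spread _ hbc.1 ih _ hbc.2.2
    have hβ_all : ∀ k ∈ β, u k = m := by
      intro k hk
      obtain ⟨i2, hi2, hadj⟩ := hbd k hk
      exact spread i2 hi2 (hα_all i2 hi2) k hadj
    intro k
    have hk : k ∈ α ∪ β := by rw [hunion]; exact Finset.mem_univ k
    rcases Finset.mem_union.mp hk with h | h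
    · exact hα_all k h
    · exact hβ_all k h
  constructor
  · intro k
    have hk0 : k0 ∈ α ∪ β := by rw [hunion]; exact Finset.mem_univ k0
    rcases Finset.mem_union.mp hk0 with h | h
    · have hall := key k0 h hmk0.symm
      obtain ⟨b0, hb0⟩ := id hβne
      calc β.inf' hβne u ≤ u b0 := Finset.inf'_le u hb0
        _ = m := hall b0
        _ ≤ u k := hmle k
    · calc β.inf' hβne u ≤ u k0 := Finset.inf'_le u h
        _ = m := hmk0.symm
        _ ≤ u k := hmle k
  · rintro ⟨i, hi, hmin⟩ k l
    have hui : u i = m := le_antisymm (by rw [hmk0]; exact hmin k0) (hmle i)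
    rw [key i hi hui k, key i hi hui l]
end

section
/- Let N ≥ 2, let {α, β} be a partition of {1,…,N} into nonempty sets, and let ~ be an adjacency relation on {1,…,N}. Let A be a real symmetric N×N matrix with all row sums zero, with A_{ij} = 0 whenever i ≠ j and i is not ~-adjacent to j, and with A_{αα} positive definite. Let M be a real symmetric positive definite, entrywise nonnegative N×N matrix with M_{ij} = 0 whenever i ≠ j and i is not ~-adjacent to j, and with M_{ij} > 0 whenever i ~ j. Assume: (a) α is ~-connected; (b) every j ∈ β is ~-adjacent to some i ∈ α; (c) for every i ∈ α there exist disjoint sets α_i ⊆ α and nonempty β_i ⊆ {1,…,N} such that i ∈ α_i, every index ~-adjacent to an element of α_i lies in α_i ∪ β_i, every k ∈ β_i is ~-adjacent to some element of α_i, the matrix A_{α_iα_i} is invertible with entrywise positive inverse, and A_{α_iβ_i} is entrywise nonpositive. Then for every u ∈ ℝ^N with (Au)_i ≥ 0 for all i ∈ α one has min_{1≤k≤N} u_k ≥ min_{j∈β} u_j. -/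
open Matrix Finset Filter Topology

/-- Key local step: if a vector with nonnegative residual on a patch attains its
global minimum at an interior point of the patch, then it is constantly equal to
that minimum on the whole patch. -/
lemma wDMP_local_key {N : ℕ} (adj : Fin N → Fin N → Prop)
    (C : Matrix (Fin N) (Fin N) ℝ)
    (hzC : ∀ i j, i ≠ j → ¬ adj i j → C i j = 0)
    (hrowC : ∀ a, ∑ j, C a j = 0)
    (αi βi : Finset (Fin N)) (hdij : Disjoint αi βi)
    (hclos : ∀ a ∈ αi, ∀ b, adj a b → b ∈ αi ∪ βi)
    (hunit : IsUnit (subm C αi αi))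
    (hinv : ∀ p q, 0 < (subm C αi αi)⁻¹ p q)
    (hblock : ∀ (p : ↥αi) (q : ↥βi), subm C αi βi p q ≤ 0)
    (hcol : ∀ k ∈ βi, ∃ a ∈ αi, C a k < 0)
    (v : Fin N → ℝ) (m : ℝ)
    (hf : ∀ a ∈ αi, 0 ≤ C.mulVec v a)
    (hm : ∀ k, m ≤ v k)
    (i : Fin N) (hi : i ∈ αi) (hvi : v i = m) :
    ∀ j ∈ αi ∪ βi, v j = m := by
  classical
  have hdet : IsUnit (subm C αi αi).det := (Matrix.isUnit_iff_isUnit_det _).mp hunit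
  set X := subm C αi αi with hX
  set W := X⁻¹ with hW
  set g : ↥αi → ℝ := fun a => C.mulVec v ↑a + ∑ k ∈ βi, (-(C ↑a k)) * (v k - m) with hg
  have hblock' : ∀ (a : ↥αi), ∀ k ∈ βi, 0 ≤ (-(C ↑a k)) * (v k - m) := by
    intro a k hk
    have h1 : C (↑a) k ≤ 0 := hblock a ⟨k, hk⟩
    exact mul_nonneg (neg_nonneg.mpr h1) (sub_nonneg.mpr (hm k))
  have hg0 : ∀ a, 0 ≤ g a := fun a =>
    add_nonneg (hf _ a.2) (Finset.sum_nonneg (hblock' a))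
  set w : ↥αi → ℝ := fun b => v ↑b - m with hwdef
  have key : X.mulVec w = g := by
    funext a
    have hout : ∀ x, x ∉ αi ∪ βi → C ↑a x * (v x - m) = 0 := by
      intro x hx
      have hxa : (a : Fin N) ≠ x := by
        rintro rfl; exact hx (Finset.mem_union_left _ a.2)
      rw [hzC _ _ hxa (fun h => hx (hclos _ a.2 _ h)), zero_mul]
    have hsplit : ∑ j, C ↑a j * (v j - m)
        = ∑ j ∈ αi, C ↑a j * (v j - m) + ∑ j ∈ βi, C ↑a j * (v j - m) := by
      rw [← Finset.sum_union hdij]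
      exact (Finset.sum_subset (Finset.subset_univ _) (fun x _ hx => hout x hx)).symm
    have htotal : ∑ j, C ↑a j * (v j - m) = C.mulVec v ↑a := by
      simp only [mul_sub, Finset.sum_sub_distrib, ← Finset.sum_mul, hrowC, zero_mul, sub_zero]
      rfl
    have hL : X.mulVec w a = ∑ j ∈ αi, C ↑a j * (v j - m) := by
      show ∑ b : ↥αi, X a b * w b = _
      rw [Finset.univ_eq_attach]
      exact Finset.sum_attach αi (fun j => C ↑a j * (v j - m))
    have hmain : ∑ j ∈ αi, C ↑a j * (v j - m)
        = C.mulVec v ↑a - ∑ j ∈ βi, C ↑a j * (v j - m) := by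
      rw [← htotal, hsplit]; ring
    rw [hL, hmain]
    show _ = (C *ᵥ v) ↑a + ∑ k ∈ βi, (-(C (↑a) k)) * (v k - m)
    rw [sub_eq_add_neg, ← Finset.sum_neg_distrib]
    congr 1
    exact Finset.sum_congr rfl fun x _ => by ring
  have hw : w = W.mulVec g := by
    rw [← key, hW, Matrix.mulVec_mulVec, Matrix.nonsing_inv_mul _ hdet, Matrix.one_mulVec]
  have hzero : ∀ q, g q = 0 := by
    have h0 : ∑ q, W ⟨i, hi⟩ q * g q = 0 := by
      have h1 := congrFun hw ⟨i, hi⟩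
      simp only [hwdef, hvi, sub_self] at h1
      exact h1.symm
    have hnn : ∀ q ∈ Finset.univ, 0 ≤ W ⟨i, hi⟩ q * g q := fun q _ =>
      mul_nonneg (le_of_lt (hinv _ q)) (hg0 q)
    intro q
    have h2 := (Finset.sum_eq_zero_iff_of_nonneg hnn).mp h0 q (Finset.mem_univ q)
    rcases mul_eq_zero.mp h2 with h | h
    · exact absurd h (ne_of_gt (hinv _ q))
    · exact h
  intro j hj
  rcases Finset.mem_union.mp hj with hja | hjb
  · have h3 : w ⟨j, hja⟩ = 0 := by
      rw [hw]
      show ∑ q, W ⟨j, hja⟩ q * g q = 0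
      exact Finset.sum_eq_zero fun q _ => by rw [hzero q, mul_zero]
    have h4 : v j - m = 0 := h3
    linarith
  · obtain ⟨a, ha, hClt⟩ := hcol j hjb
    have hga : g ⟨a, ha⟩ = 0 := hzero ⟨a, ha⟩
    have hsum0 : ∑ k ∈ βi, (-(C a k)) * (v k - m) = 0 := by
      have h1 : 0 ≤ C.mulVec v a := hf a ha
      have h2 : 0 ≤ ∑ k ∈ βi, (-(C a k)) * (v k - m) :=
        Finset.sum_nonneg (hblock' ⟨a, ha⟩)
      have h3 := hga
      simp only [hg] at h3
      linarith
    have h5 := (Finset.sum_eq_zero_iff_of_nonneg (hblock' ⟨a, ha⟩)).mp hsum0 j hjb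
    rcases mul_eq_zero.mp h5 with h | h
    · exact absurd h (ne_of_gt (neg_pos.mpr hClt))
    · linarith [sub_eq_zero.mp h]

/-- Strong discrete maximum principle for a matrix with zero row sums and
strict local sign conditions. -/
lemma wDMP_sDMP {N : ℕ} (α β : Finset (Fin N)) (hunion : α ∪ β = Finset.univ)
    (hβne : β.Nonempty)
    (adj : Fin N → Fin N → Prop)
    (C : Matrix (Fin N) (Fin N) ℝ)
    (hrowC : ∀ a, ∑ j, C a j = 0)
    (hzC : ∀ i j, i ≠ j → ¬ adj i j → C i j = 0)
    (hconn : AdjConnected adj α)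
    (hbd : ∀ j ∈ β, ∃ i ∈ α, adj i j)
    (hloc : ∀ i ∈ α, ∃ αi βi : Finset (Fin N),
      αi ⊆ α ∧ Disjoint αi βi ∧ i ∈ αi ∧
      (∀ a ∈ αi, ∀ b, adj a b → b ∈ αi ∪ βi) ∧
      IsUnit (subm C αi αi) ∧ (∀ p q, 0 < (subm C αi αi)⁻¹ p q) ∧
      (∀ (p : ↥αi) (q : ↥βi), subm C αi βi p q ≤ 0) ∧
      (∀ k ∈ βi, ∃ a ∈ αi, C a k < 0))
    (v : Fin N → ℝ) (hv : ∀ i ∈ α, 0 ≤ C.mulVec v i) :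
    ∀ k, β.inf' hβne v ≤ v k := by
  classical
  have huniv : (Finset.univ : Finset (Fin N)).Nonempty :=
    ⟨hβne.choose, Finset.mem_univ _⟩
  set m := Finset.univ.inf' huniv v with hmdef
  obtain ⟨i0, -, hi0⟩ := Finset.exists_mem_eq_inf' huniv v
  have hmle : ∀ k, m ≤ v k := fun k => Finset.inf'_le _ (Finset.mem_univ k)
  suffices h : ∃ j ∈ β, v j = m by
    obtain ⟨j, hj, hvj⟩ := h
    intro k
    calc β.inf' hβne v ≤ v j := Finset.inf'_le _ hj
    _ = m := hvj
    _ ≤ v k := hmle k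
  have hstep : ∀ i ∈ α, v i = m → ∀ b, adj i b → v b = m := by
    intro i hiα hvi b hadj
    obtain ⟨αi, βi, hsub, hdij, hmem, hclos, hunit, hinv, hblock, hcol⟩ := hloc i hiα
    exact wDMP_local_key adj C hzC hrowC αi βi hdij hclos hunit hinv hblock hcol v m
      (fun a ha => hv a (hsub ha)) hmle i hmem hvi b (hclos i hmem b hadj)
  rcases Finset.mem_union.mp (hunion ▸ Finset.mem_univ i0) with hα | hβ
  · have hall : ∀ j ∈ α, v j = m := by
      have hall' : ∀ j, Relation.ReflTransGen
          (fun a b => a ∈ α ∧ b ∈ α ∧ adj a b) i0 j → v j = m := by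
        intro j hpath
        induction hpath with
        | refl => exact hi0.symm
        | tail _ hrel ih => exact hstep _ hrel.1 ih _ hrel.2.2
      intro j hj
      exact hall' j (hconn i0 hα j hj)
    obtain ⟨j0, hj0⟩ := hβne
    obtain ⟨a, ha, hadj⟩ := hbd j0 hj0
    exact ⟨j0, hj0, hstep a ha (hall a ha) j0 hadj⟩
  · exact ⟨i0, hβ, hi0.symm⟩

lemma wDMP_F_cont {n : Type*} [Fintype n] [DecidableEq n] (X Y : Matrix n n ℝ) :
    Continuous (fun ε : ℝ => X - ε • Y) :=
  continuous_const.sub (continuous_id.smul continuous_const)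

lemma wDMP_F_zero {n : Type*} [Fintype n] [DecidableEq n] (X Y : Matrix n n ℝ) :
    X - (0:ℝ) • Y = X := by simp

lemma wDMP_det_ne_zero {n : Type*} [Fintype n] [DecidableEq n]
    {X : Matrix n n ℝ} (hX : IsUnit X) : X.det ≠ 0 :=
  ((Matrix.isUnit_iff_isUnit_det X).mp hX).ne_zero

lemma wDMP_inv_entry_tendsto {n : Type*} [Fintype n] [DecidableEq n]
    (X Y : Matrix n n ℝ) (hX : IsUnit X) (p q : n) :
    Tendsto (fun ε : ℝ => (X - ε • Y)⁻¹ p q) (𝓝 0) (𝓝 (X⁻¹ p q)) := by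
  have hF : Continuous (fun ε : ℝ => X - ε • Y) := wDMP_F_cont X Y
  have hdet : Continuous fun ε : ℝ => (X - ε • Y).det := hF.matrix_det
  have hdet0 : (X - (0:ℝ) • Y).det ≠ 0 := by
    rw [wDMP_F_zero]; exact wDMP_det_ne_zero hX
  have hadj : Continuous fun ε : ℝ => (X - ε • Y).adjugate p q :=
    (continuous_apply q).comp ((continuous_apply p).comp hF.matrix_adjugate)
  have hent : ∀ M : Matrix n n ℝ, M⁻¹ p q = (M.det)⁻¹ * M.adjugate p q := by
    intro M
    rw [Matrix.inv_def, Ring.inverse_eq_inv']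
    simp [Matrix.smul_apply, smul_eq_mul]
  simp only [hent]
  have h1 : Tendsto (fun ε : ℝ => ((X - ε • Y).det)⁻¹) (𝓝 0)
      (𝓝 (((X - (0:ℝ) • Y).det)⁻¹)) := hdet.continuousAt.inv₀ hdet0
  have h2 := h1.mul hadj.continuousAt
  simp only [wDMP_F_zero] at h2
  exact h2

lemma wDMP_eventually_isUnit {n : Type*} [Fintype n] [DecidableEq n]
    (X Y : Matrix n n ℝ) (hX : IsUnit X) :
    ∀ᶠ ε : ℝ in 𝓝 0, IsUnit (X - ε • Y) := by
  have hF : Continuous (fun ε : ℝ => X - ε • Y) := wDMP_F_cont X Y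
  have hdet : Continuous fun ε : ℝ => (X - ε • Y).det := hF.matrix_det
  have hdet0 : (X - (0:ℝ) • Y).det ≠ 0 := by
    rw [wDMP_F_zero]; exact wDMP_det_ne_zero hX
  filter_upwards [hdet.continuousAt.eventually_ne hdet0] with ε hε
  exact (Matrix.isUnit_iff_isUnit_det _).mpr (isUnit_iff_ne_zero.mpr hε)

lemma wDMP_eventually_inv_pos {n : Type*} [Fintype n] [DecidableEq n]
    (X Y : Matrix n n ℝ) (hX : IsUnit X) (hpos : ∀ p q, 0 < X⁻¹ p q) :
    ∀ᶠ ε : ℝ in 𝓝 0, ∀ p q, 0 < (X - ε • Y)⁻¹ p q := by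
  rw [Filter.eventually_all]
  intro p
  rw [Filter.eventually_all]
  intro q
  exact (wDMP_inv_entry_tendsto X Y hX p q).eventually (eventually_gt_nhds (hpos p q))

lemma wDMP_mulVec_subm_eq {N : ℕ} (D : Matrix (Fin N) (Fin N) ℝ)
    (γ δ : Finset (Fin N))
    (x : ↥δ → ℝ) (x' : Fin N → ℝ) (hx' : ∀ (j : ↥δ), x' ↑j = x j) (a : ↥γ) :
    (subm D γ δ).mulVec x a = ∑ j ∈ δ, D ↑a j * x' j := by
  show ∑ b : ↥δ, D ↑a ↑b * x b = _
  rw [Finset.univ_eq_attach]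
  calc ∑ b ∈ δ.attach, D ↑a ↑b * x b
      = ∑ b ∈ δ.attach, D ↑a ↑b * x' ↑b :=
        Finset.sum_congr rfl (fun b _ => by rw [hx' b])
    _ = _ := Finset.sum_attach δ (fun j => D ↑a j * x' j)

lemma wDMP_subm_sub_smul {N : ℕ} (A B : Matrix (Fin N) (Fin N) ℝ) (ε : ℝ)
    (γ δ : Finset (Fin N)) :
    subm (A - ε • B) γ δ = subm A γ δ - ε • subm B γ δ := by
  funext p q
  simp [subm, Matrix.sub_apply, Matrix.smul_apply]

/-- Global weak discrete maximum principle wDMP-A (matrix–graph form) for a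
symmetric stiffness matrix `A` together with a symmetric positive definite
mass matrix `M`, under relaxed (nonstrict) sign conditions on the local
interior–boundary blocks. -/
theorem wDMP_A_global {N : ℕ} (hN : 2 ≤ N)
    (α β : Finset (Fin N)) (hdisj : Disjoint α β) (hunion : α ∪ β = Finset.univ)
    (hαne : α.Nonempty) (hβne : β.Nonempty)
    (adj : Fin N → Fin N → Prop) (hsym : Symmetric adj) (hirr : Irreflexive adj)
    (A : Matrix (Fin N) (Fin N) ℝ)
    (hAsymm : A.IsSymm)
    (hrow : ∀ i, ∑ j, A i j = 0)
    (hzA : ∀ i j, i ≠ j → ¬ adj i j → A i j = 0)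
    (hApd : (subm A α α).PosDef)
    (M : Matrix (Fin N) (Fin N) ℝ)
    (hMsymm : M.IsSymm) (hMpd : M.PosDef)
    (hMnn : ∀ i j, 0 ≤ M i j)
    (hzM : ∀ i j, i ≠ j → ¬ adj i j → M i j = 0)
    (hMadj : ∀ i j, adj i j → 0 < M i j)
    (hconn : AdjConnected adj α)
    (hbd : ∀ j ∈ β, ∃ i ∈ α, adj i j)
    (hloc : ∀ i ∈ α, ∃ αi βi : Finset (Fin N),
      αi ⊆ α ∧ βi.Nonempty ∧ Disjoint αi βi ∧ i ∈ αi ∧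
      (∀ a ∈ αi, ∀ b, adj a b → b ∈ αi ∪ βi) ∧
      (∀ k ∈ βi, ∃ a ∈ αi, adj a k) ∧
      IsUnit (subm A αi αi) ∧
      (∀ p q, 0 < (subm A αi αi)⁻¹ p q) ∧
      (∀ p q, subm A αi βi p q ≤ 0)) :
    ∀ u : Fin N → ℝ, (∀ i ∈ α, 0 ≤ A.mulVec u i) →
      ∀ k, β.inf' hβne u ≤ u k := by
  classical
  intro u hu k
  choose! αi βi hsub hβine hdij hmem hclos hbdloc hAunit hAinv hAblock using hloc
  -- the zero-row-sum modification of the mass matrix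
  set Mz : Matrix (Fin N) (Fin N) ℝ := M - Matrix.diagonal (fun i => ∑ j, M i j) with hMzdef
  have hMzoff : ∀ i j, i ≠ j → Mz i j = M i j := by
    intro i j hij
    simp [hMzdef, Matrix.sub_apply, Matrix.diagonal_apply_ne _ hij]
  have hMzrow : ∀ i, ∑ j, Mz i j = 0 := by
    intro i
    simp [hMzdef, Matrix.sub_apply, Finset.sum_sub_distrib, Matrix.diagonal_apply,
      Finset.sum_ite_eq, Finset.mem_univ]
  set C : ℝ → Matrix (Fin N) (Fin N) ℝ := fun ε => A - ε • Mz with hCdef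
  have hCapp : ∀ ε i j, C ε i j = A i j - ε * Mz i j := by
    intro ε i j; simp [hCdef, Matrix.sub_apply, Matrix.smul_apply]
  have hCrow : ∀ ε a, ∑ j, C ε a j = 0 := by
    intro ε a
    simp only [hCapp]
    rw [Finset.sum_sub_distrib, hrow, ← Finset.mul_sum, hMzrow, mul_zero, sub_zero]
  have hzC : ∀ ε i j, i ≠ j → ¬ adj i j → C ε i j = 0 := by
    intro ε i j hij hn
    rw [hCapp, hzA i j hij hn, hMzoff i j hij, hzM i j hij hn, mul_zero, sub_zero]
  have hαunit : IsUnit (subm A α α) :=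
    (Matrix.isUnit_iff_isUnit_det _).mpr (isUnit_iff_ne_zero.mpr hApd.det_pos.ne')
  have hsubC : ∀ (ε : ℝ) γ δ, subm (C ε) γ δ = subm A γ δ - ε • subm Mz γ δ := by
    intro ε γ δ; exact wDMP_subm_sub_smul A Mz ε γ δ
  have ev1 : ∀ᶠ ε : ℝ in 𝓝 0, IsUnit (subm (C ε) α α) := by
    filter_upwards [wDMP_eventually_isUnit (subm A α α) (subm Mz α α) hαunit] with ε hε
    rw [hsubC]; exact hε
  have ev2 : ∀ᶠ ε : ℝ in 𝓝 0, ∀ i, i ∈ α →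
      IsUnit (subm (C ε) (αi i) (αi i)) ∧
      ∀ p q, 0 < (subm (C ε) (αi i) (αi i))⁻¹ p q := by
    rw [Filter.eventually_all]
    intro i
    by_cases hiα : i ∈ α
    · filter_upwards [wDMP_eventually_isUnit (subm A (αi i) (αi i)) (subm Mz (αi i) (αi i))
        (hAunit i hiα),
        wDMP_eventually_inv_pos (subm A (αi i) (αi i)) (subm Mz (αi i) (αi i))
        (hAunit i hiα) (hAinv i hiα)] with ε h1 h2
      intro _
      rw [hsubC]
      exact ⟨h1, h2⟩
    · exact Filter.Eventually.of_forall (fun ε h => absurd h hiα)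
  -- the perturbed solutions
  set r : ℝ → ↥α → ℝ := fun ε a => A.mulVec u ↑a - ∑ j ∈ β, C ε ↑a j * u j with hrdef
  set uu : ℝ → Fin N → ℝ := fun ε k =>
    if h : k ∈ α then (subm (C ε) α α)⁻¹.mulVec (r ε) ⟨k, h⟩ else u k with huudef
  have huuβ : ∀ (ε : ℝ) j, j ∈ β → uu ε j = u j := by
    intro ε j hj
    have hjα : j ∉ α := Finset.disjoint_right.mp hdisj hj
    simp [huudef, hjα]
  have hpart : ∀ h : Fin N → ℝ, ∑ j, h j = ∑ j ∈ α, h j + ∑ j ∈ β, h j := by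
    intro h
    rw [← Finset.sum_union hdisj, hunion]
  -- per-ε estimate via the strong principle
  have hmain : ∀ ε : ℝ, 0 < ε → IsUnit (subm (C ε) α α) →
      (∀ i, i ∈ α → IsUnit (subm (C ε) (αi i) (αi i)) ∧
        ∀ p q, 0 < (subm (C ε) (αi i) (αi i))⁻¹ p q) →
      β.inf' hβne u ≤ uu ε k := by
    intro ε hε hUα hUi
    have hdetα : IsUnit (subm (C ε) α α).det := (Matrix.isUnit_iff_isUnit_det _).mp hUα
    have hsolve : (subm (C ε) α α).mulVec ((subm (C ε) α α)⁻¹.mulVec (r ε)) = r ε := by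
      rw [Matrix.mulVec_mulVec, Matrix.mul_nonsing_inv _ hdetα, Matrix.one_mulVec]
    have hres : ∀ a ∈ α, (C ε).mulVec (uu ε) a = A.mulVec u a := by
      intro a ha
      have h1 : (C ε).mulVec (uu ε) a = ∑ j, C ε a j * uu ε j := rfl
      rw [h1, hpart]
      have h2 : ∑ j ∈ α, C ε a j * uu ε j
          = (subm (C ε) α α).mulVec ((subm (C ε) α α)⁻¹.mulVec (r ε)) ⟨a, ha⟩ := by
        refine (wDMP_mulVec_subm_eq (C ε) α α _ (uu ε) ?_ ⟨a, ha⟩).symm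
        intro j
        simp [huudef, j.2]
      have h3 : ∑ j ∈ β, C ε a j * uu ε j = ∑ j ∈ β, C ε a j * u j :=
        Finset.sum_congr rfl fun j hj => by rw [huuβ ε j hj]
      rw [h2, h3, hsolve]
      simp [hrdef]
    have hlocC : ∀ i ∈ α, ∃ αi' βi' : Finset (Fin N),
        αi' ⊆ α ∧ Disjoint αi' βi' ∧ i ∈ αi' ∧
        (∀ a ∈ αi', ∀ b, adj a b → b ∈ αi' ∪ βi') ∧
        IsUnit (subm (C ε) αi' αi') ∧ (∀ p q, 0 < (subm (C ε) αi' αi')⁻¹ p q) ∧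
        (∀ (p : ↥αi') (q : ↥βi'), subm (C ε) αi' βi' p q ≤ 0) ∧
        (∀ kk ∈ βi', ∃ a ∈ αi', C ε a kk < 0) := by
      intro i hiα
      refine ⟨αi i, βi i, hsub i hiα, hdij i hiα, hmem i hiα, hclos i hiα,
        (hUi i hiα).1, (hUi i hiα).2, ?_, ?_⟩
      · intro p q
        have hpq : (p : Fin N) ≠ (q : Fin N) := by
          intro hne
          exact Finset.disjoint_left.mp (hdij i hiα) p.2 (hne ▸ q.2)
        have h1 : subm (C ε) (αi i) (βi i) p q = A ↑p ↑q - ε * M ↑p ↑q := by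
          show C ε ↑p ↑q = _
          rw [hCapp, hMzoff _ _ hpq]
        have h2 : A (↑p) (↑q) ≤ 0 := hAblock i hiα p q
        have h3 : 0 ≤ M ↑p ↑q := hMnn _ _
        rw [h1]
        nlinarith
      · intro kk hkk
        obtain ⟨a, ha, hadj⟩ := hbdloc i hiα kk hkk
        refine ⟨a, ha, ?_⟩
        have hak : a ≠ kk := fun h => hirr kk (h ▸ hadj)
        have h1 : C ε a kk = A a kk - ε * M a kk := by
          rw [hCapp, hMzoff _ _ hak]
        have h2 : A a kk ≤ 0 := hAblock i hiα ⟨a, ha⟩ ⟨kk, hkk⟩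
        have h3 : 0 < M a kk := hMadj _ _ hadj
        rw [h1]
        nlinarith
    have hvC : ∀ i ∈ α, 0 ≤ (C ε).mulVec (uu ε) i := by
      intro i hiα
      rw [hres i hiα]
      exact hu i hiα
    have hDMP := wDMP_sDMP α β hunion hβne adj (C ε) (hCrow ε) (hzC ε) hconn hbd
      hlocC (uu ε) hvC
    have hinf : β.inf' hβne (uu ε) = β.inf' hβne u :=
      Finset.inf'_congr hβne rfl (fun j hj => huuβ ε j hj)
    calc β.inf' hβne u = β.inf' hβne (uu ε) := hinf.symm
      _ ≤ uu ε k := hDMP k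
  -- pass to the limit ε → 0⁺
  have hev : ∀ᶠ ε : ℝ in 𝓝[>] 0, β.inf' hβne u ≤ uu ε k := by
    have hpos : ∀ᶠ ε : ℝ in 𝓝[>] (0:ℝ), 0 < ε :=
      eventually_mem_nhdsWithin.mono (fun ε h => h)
    filter_upwards [hpos, (ev1.and ev2).filter_mono nhdsWithin_le_nhds] with ε h1 h2
    exact hmain ε h1 h2.1 h2.2
  have htends : Tendsto (fun ε : ℝ => uu ε k) (𝓝[>] 0) (𝓝 (u k)) := by
    by_cases hk : k ∈ α
    · have heq : ∀ ε : ℝ, uu ε k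
          = ∑ b : ↥α, (subm A α α - ε • subm Mz α α)⁻¹ ⟨k, hk⟩ b * r ε b := by
        intro ε
        simp only [huudef, dif_pos hk, ← hsubC]
        rfl
      have hrt : ∀ b : ↥α, Tendsto (fun ε : ℝ => r ε b) (𝓝 0) (𝓝 (r 0 b)) := by
        intro b
        have hc : Continuous (fun ε : ℝ => r ε b) := by
          simp only [hrdef, hCapp]
          exact continuous_const.sub (continuous_finset_sum _ fun j _ =>
            (continuous_const.sub (continuous_id.mul continuous_const)).mul continuous_const)
        exact hc.continuousAt
      have hlim : Tendsto (fun ε : ℝ => uu ε k) (𝓝 0)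
          (𝓝 (∑ b : ↥α, (subm A α α)⁻¹ ⟨k, hk⟩ b * r 0 b)) := by
        rw [show (fun ε : ℝ => uu ε k) = fun ε : ℝ =>
          ∑ b : ↥α, (subm A α α - ε • subm Mz α α)⁻¹ ⟨k, hk⟩ b * r ε b from funext heq]
        exact tendsto_finset_sum _ fun b _ =>
          (wDMP_inv_entry_tendsto (subm A α α) (subm Mz α α) hαunit ⟨k, hk⟩ b).mul (hrt b)
      have hval : ∑ b : ↥α, (subm A α α)⁻¹ ⟨k, hk⟩ b * r 0 b = u k := by
        have hr0 : ∀ b : ↥α, r 0 b = (subm A α α).mulVec (fun c : ↥α => u ↑c) b := by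
          intro b
          have h1 : r 0 b = A.mulVec u ↑b - ∑ j ∈ β, A ↑b j * u j := by
            simp [hrdef, hCapp]
          have h2 : A.mulVec u ↑b = ∑ j ∈ α, A ↑b j * u j + ∑ j ∈ β, A ↑b j * u j := hpart _
          rw [h1, h2, wDMP_mulVec_subm_eq A α α (fun c : ↥α => u ↑c) u (fun j => rfl) b]
          ring
        have h3 : ∑ b : ↥α, (subm A α α)⁻¹ ⟨k, hk⟩ b * r 0 b
            = ((subm A α α)⁻¹ * subm A α α).mulVec (fun c : ↥α => u ↑c) ⟨k, hk⟩ := by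
          rw [← Matrix.mulVec_mulVec]
          show _ = ∑ b : ↥α, (subm A α α)⁻¹ ⟨k, hk⟩ b * ((subm A α α).mulVec _) b
          exact Finset.sum_congr rfl fun b _ => by rw [hr0 b]
        rw [h3, Matrix.nonsing_inv_mul _ ((Matrix.isUnit_iff_isUnit_det _).mp hαunit),
          Matrix.one_mulVec]
      rw [hval] at hlim
      exact hlim.mono_left nhdsWithin_le_nhds
    · have hconst : ∀ ε : ℝ, uu ε k = u k := fun ε => by simp [huudef, hk]
      rw [show (fun ε : ℝ => uu ε k) = fun _ => u k from funext hconst]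
      exact tendsto_const_nhds
  exact ge_of_tendsto htends hev
end

section
/- Let N ≥ 2, let {α, β} be a partition of {1,…,N} into nonempty sets, and let A be a real N×N matrix with all row sums zero. Assume A_{αα} is invertible, A_{αα}^{-1} is entrywise positive, and A_{αα}^{-1} A_{αβ} is entrywise negative. Then for every F ∈ ℝ^α with F entrywise nonnegative and every u ∈ ℝ^N satisfying A_{αα} u_α + A_{αβ} u_β = F: (i) min_{i∈α} u_i ≥ min_{j∈β} u_j; and (ii) if the minimum of u over all of {1,…,N} is attained at some index in α, then u is constant. -/
open Matrix Finset

/-- Matrix form of the strong discrete maximum principle sDMP-A: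
sufficiency of the sign conditions on `A_{αα}⁻¹` and `A_{αα}⁻¹ A_{αβ}`. -/
theorem sDMP_A_of_matrix_conditions {N : ℕ} (hN : 2 ≤ N)
    (α β : Finset (Fin N)) (hdisj : Disjoint α β) (hunion : α ∪ β = Finset.univ)
    (hαne : α.Nonempty) (hβne : β.Nonempty)
    (A : Matrix (Fin N) (Fin N) ℝ)
    (hrow : ∀ i, ∑ j, A i j = 0)
    (hinv : IsUnit (subm A α α))
    (hpos : ∀ p q, 0 < (subm A α α)⁻¹ p q)
    (hneg : ∀ p q, ((subm A α α)⁻¹ * subm A α β) p q < 0) :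
    ∀ (F : ↥α → ℝ), (∀ p, 0 ≤ F p) →
      ∀ u : Fin N → ℝ,
        (subm A α α).mulVec (fun p => u p.val) +
          (subm A α β).mulVec (fun q => u q.val) = F →
        (∀ i ∈ α, β.inf' hβne u ≤ u i) ∧
        ((∃ i ∈ α, ∀ k, u i ≤ u k) → ∀ k l, u k = u l) := by
  intro F hF u hu
  set B := (subm A α α)⁻¹ with hB
  set C := B * subm A α β with hC
  have hdet : IsUnit (subm A α α).det := (Matrix.isUnit_iff_isUnit_det _).mp hinv
  have hBA : B * subm A α α = 1 := Matrix.nonsing_inv_mul _ hdet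
  -- row sums split
  have hrowsplit : ∀ p : ↥α,
      (∑ q : ↥α, subm A α α p q) + (∑ q : ↥β, subm A α β p q) = 0 := by
    intro p
    have h1 : ∑ j, A p.val j = 0 := hrow p.val
    rw [← hunion, Finset.sum_union hdisj] at h1
    simpa [subm, Matrix.submatrix_apply, Finset.sum_coe_sort,
      Finset.sum_attach] using h1
  -- C row sums are -1
  have hCrow : ∀ p : ↥α, ∑ q : ↥β, C p q = -1 := by
    intro p
    have h1 : ∑ q : ↥β, C p q
        = ∑ r : ↥α, B p r * ∑ q : ↥β, subm A α β r q := by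
      simp only [hC, Matrix.mul_apply, Finset.mul_sum]
      rw [Finset.sum_comm]
    rw [h1]
    have h2 : ∀ r : ↥α, ∑ q : ↥β, subm A α β r q = - ∑ q : ↥α, subm A α α r q := by
      intro r; linarith [hrowsplit r]
    calc ∑ r : ↥α, B p r * ∑ q : ↥β, subm A α β r q
        = - ∑ q : ↥α, (B * subm A α α) p q := by
          simp only [h2, Matrix.mul_apply, mul_neg, Finset.mul_sum,
            Finset.sum_neg_distrib]
          rw [Finset.sum_comm]
      _ = -1 := by
          rw [hBA]
          simp [Matrix.one_apply]
  -- the representation of u on α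
  have key : ∀ p : ↥α,
      u p.val + ∑ q : ↥β, C p q * u q.val = B.mulVec F p := by
    intro p
    have h1 := congrArg (fun v => B.mulVec v) hu
    have h2 : (fun p : ↥α => u p.val) + C.mulVec (fun q : ↥β => u q.val)
        = B.mulVec F := by
      simpa [Matrix.mulVec_add, Matrix.mulVec_mulVec, hBA, Matrix.one_mulVec,
        hC] using h1
    have := congrFun h2 p
    simpa [Matrix.mulVec, dotProduct] using this
  set m := β.inf' hβne u with hm
  have hBF : ∀ p : ↥α, 0 ≤ B.mulVec F p := by
    intro p
    apply Finset.sum_nonneg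
    intro q _
    exact mul_nonneg (le_of_lt (hpos p q)) (hF q)
  have hCrow' : ∀ p : ↥α, ∑ q : ↥β, (-C p q) = 1 := by
    intro p; rw [Finset.sum_neg_distrib, hCrow]; ring
  have hsum_ge : ∀ p : ↥α, m ≤ ∑ q : ↥β, (-C p q) * u q.val := by
    intro p
    calc m = ∑ q : ↥β, (-C p q) * m := by
          rw [← Finset.sum_mul, hCrow' p, one_mul]
      _ ≤ ∑ q : ↥β, (-C p q) * u q.val := by
          apply Finset.sum_le_sum
          intro q _
          exact mul_le_mul_of_nonneg_left (Finset.inf'_le u q.2)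
            (le_of_lt (neg_pos.mpr (hneg p q)))
  have key' : ∀ p : ↥α, u p.val = B.mulVec F p + ∑ q : ↥β, (-C p q) * u q.val := by
    intro p
    have := key p
    have h3 : ∑ q : ↥β, (-C p q) * u q.val = - ∑ q : ↥β, C p q * u q.val := by
      rw [← Finset.sum_neg_distrib]; congr 1; ext q; ring
    rw [h3]; linarith
  have part1 : ∀ i ∈ α, m ≤ u i := by
    intro i hi
    have := key' ⟨i, hi⟩
    have h1 := hBF ⟨i, hi⟩
    have h2 := hsum_ge ⟨i, hi⟩
    simp only at this
    linarith
  refine ⟨part1, ?_⟩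
  rintro ⟨i, hi, hmin⟩ k l
  set p : ↥α := ⟨i, hi⟩
  have hium : u i ≤ m := Finset.le_inf' hβne u (fun j _ => hmin j)
  have huim : u i = m := le_antisymm hium (part1 i hi)
  have hk1 := key' p
  have hBFp0 : B.mulVec F p = 0 :=
    le_antisymm (by have := hsum_ge p; linarith) (hBF p)
  have hS : ∑ q : ↥β, (-C p q) * u q.val = m := by
    linarith
  -- u q = m on β
  have huβ : ∀ q : ↥β, u q.val = m := by
    have hzero : ∑ q : ↥β, (-C p q) * (u q.val - m) = 0 := by
      have : ∑ q : ↥β, (-C p q) * (u q.val - m)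
          = (∑ q : ↥β, (-C p q) * u q.val) - (∑ q : ↥β, (-C p q)) * m := by
        rw [Finset.sum_mul, ← Finset.sum_sub_distrib]; congr 1; ext q; ring
      rw [this, hS, hCrow' p]; ring
    intro q
    have hterm : ∀ r ∈ (Finset.univ : Finset ↥β), 0 ≤ (-C p r) * (u r.val - m) := by
      intro r _
      exact mul_nonneg (le_of_lt (neg_pos.mpr (hneg p r)))
        (by linarith [Finset.inf'_le u r.2])
    have := (Finset.sum_eq_zero_iff_of_nonneg hterm).mp hzero q (Finset.mem_univ q)
    have hCne : (-C p q) ≠ 0 := ne_of_gt (neg_pos.mpr (hneg p q))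
    have := mul_eq_zero.mp this
    rcases this with h | h
    · exact absurd h hCne
    · linarith
  -- F = 0
  have hF0 : ∀ q : ↥α, F q = 0 := by
    have h1 : ∑ q : ↥α, B p q * F q = 0 := by
      have : B.mulVec F p = ∑ q : ↥α, B p q * F q := by
        simp [Matrix.mulVec, dotProduct]
      rw [← this]; exact hBFp0
    intro q
    have hterm : ∀ r ∈ (Finset.univ : Finset ↥α), 0 ≤ B p r * F r :=
      fun r _ => mul_nonneg (le_of_lt (hpos p r)) (hF r)
    have := (Finset.sum_eq_zero_iff_of_nonneg hterm).mp h1 q (Finset.mem_univ q)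
    rcases mul_eq_zero.mp this with h | h
    · exact absurd h (ne_of_gt (hpos p q))
    · exact h
  -- all of u equals m
  have hall : ∀ j : Fin N, u j = m := by
    intro j
    have hj : j ∈ α ∪ β := by rw [hunion]; exact Finset.mem_univ j
    rcases Finset.mem_union.mp hj with hj | hj
    · have hk := key' ⟨j, hj⟩
      have hBF0 : B.mulVec F ⟨j, hj⟩ = 0 := by
        have : B.mulVec F ⟨j, hj⟩ = ∑ q : ↥α, B ⟨j, hj⟩ q * F q := by
          simp [Matrix.mulVec, dotProduct]
        rw [this]
        apply Finset.sum_eq_zero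
        intro q _
        rw [hF0 q, mul_zero]
      have hsum : ∑ q : ↥β, (-C ⟨j, hj⟩ q) * u q.val = m := by
        calc ∑ q : ↥β, (-C ⟨j, hj⟩ q) * u q.val
            = ∑ q : ↥β, (-C ⟨j, hj⟩ q) * m := by
              apply Finset.sum_congr rfl
              intro q _
              rw [huβ q]
          _ = m := by rw [← Finset.sum_mul, hCrow', one_mul]
      simp only at hk
      rw [hk, hBF0, hsum, zero_add]
    · exact huβ ⟨j, hj⟩
  rw [hall k, hall l]
end

section
/- Let N ≥ 2, let {α, β} be a partition of {1,…,N} into nonempty sets, and let A be a real N×N matrix with all row sums zero such that A_{αα} is invertible. Suppose that for every F ∈ ℝ^α with F entrywise nonnegative and every u ∈ ℝ^N satisfying A_{αα} u_α + A_{αβ} u_β = F, one has min_{i∈α} u_i ≥ min_{j∈β} u_j, and u is constant whenever the minimum of u over all of {1,…,N} is attained at some index in α. Then A_{αα}^{-1} is entrywise positive and A_{αα}^{-1} A_{αβ} is entrywise negative. -/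
open Matrix Finset

lemma mulVec_ind {I J : Type*} [Fintype J] [DecidableEq J] (M : Matrix I J ℝ) (q0 : J) (i : I) :
    M.mulVec (fun j => if j = q0 then (1:ℝ) else 0) i = M i q0 := by
  simp [Matrix.mulVec, dotProduct, mul_ite]

lemma aux_solve {N : ℕ} (α β : Finset (Fin N)) (hdisj : Disjoint α β)
    (hunion : α ∪ β = Finset.univ)
    (A : Matrix (Fin N) (Fin N) ℝ) (hinv : IsUnit (subm A α α))
    (v : ↥β → ℝ) (F : ↥α → ℝ) :
    ∃ u : Fin N → ℝ,
      (∀ p : ↥α, u p.val = ((subm A α α)⁻¹).mulVec (F - (subm A α β).mulVec v) p) ∧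
      (∀ q : ↥β, u q.val = v q) ∧
      (subm A α α).mulVec (fun p => u p.val) + (subm A α β).mulVec (fun q => u q.val) = F := by
  classical
  have hmemβ : ∀ i : Fin N, i ∉ α → i ∈ β := by
    intro i hi
    have h : i ∈ α ∪ β := by rw [hunion]; exact Finset.mem_univ i
    rcases Finset.mem_union.mp h with h | h
    · exact absurd h hi
    · exact h
  set w := F - (subm A α β).mulVec v with hw
  refine ⟨fun i => if h : i ∈ α then ((subm A α α)⁻¹).mulVec w ⟨i, h⟩ else v ⟨i, hmemβ i h⟩,
    ?_, ?_, ?_⟩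
  · intro p; simp [p.2]
  · intro q
    have hq : (q : Fin N) ∉ α := fun hqa => Finset.disjoint_left.mp hdisj hqa q.2
    simp [hq]
  · have h1 : (fun p : ↥α => (if h : (p:Fin N) ∈ α then ((subm A α α)⁻¹).mulVec w ⟨p, h⟩
        else v ⟨p, hmemβ p h⟩)) = ((subm A α α)⁻¹).mulVec w := by
      funext p; simp [p.2]
    have h2 : (fun q : ↥β => (if h : (q:Fin N) ∈ α then ((subm A α α)⁻¹).mulVec w ⟨q, h⟩
        else v ⟨q, hmemβ q h⟩)) = v := by
      funext q
      have hq : (q : Fin N) ∉ α := fun hqa => Finset.disjoint_left.mp hdisj hqa q.2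
      simp [hq]
    rw [h1, h2, Matrix.mulVec_mulVec,
      Matrix.mul_nonsing_inv _ ((Matrix.isUnit_iff_isUnit_det _).mp hinv),
      Matrix.one_mulVec, hw]
    abel

/-- Matrix form of the strong discrete maximum principle sDMP-A:
necessity of the sign conditions on `A_{αα}⁻¹` and `A_{αα}⁻¹ A_{αβ}`. -/
theorem matrix_conditions_of_sDMP_A {N : ℕ} (hN : 2 ≤ N)
    (α β : Finset (Fin N)) (hdisj : Disjoint α β) (hunion : α ∪ β = Finset.univ)
    (hαne : α.Nonempty) (hβne : β.Nonempty)
    (A : Matrix (Fin N) (Fin N) ℝ)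
    (hrow : ∀ i, ∑ j, A i j = 0)
    (hinv : IsUnit (subm A α α))
    (hdmp : ∀ (F : ↥α → ℝ), (∀ p, 0 ≤ F p) →
      ∀ u : Fin N → ℝ,
        (subm A α α).mulVec (fun p => u p.val) +
          (subm A α β).mulVec (fun q => u q.val) = F →
        (∀ i ∈ α, β.inf' hβne u ≤ u i) ∧
        ((∃ i ∈ α, ∀ k, u i ≤ u k) → ∀ k l, u k = u l)) :
    (∀ p q, 0 < (subm A α α)⁻¹ p q) ∧
    (∀ p q, ((subm A α α)⁻¹ * subm A α β) p q < 0) := by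
  classical
  set B := (subm A α α)⁻¹ with hB
  have hmemβ : ∀ i : Fin N, i ∉ α → i ∈ β := by
    intro i hi
    have h : i ∈ α ∪ β := by rw [hunion]; exact Finset.mem_univ i
    rcases Finset.mem_union.mp h with h | h
    · exact absurd h hi
    · exact h
  constructor
  · -- positivity of B
    intro p0 q0
    set F : ↥α → ℝ := fun p => if p = q0 then 1 else 0 with hF
    obtain ⟨u, hu_α, hu_β, heq⟩ := aux_solve α β hdisj hunion A hinv 0 F
    have hFnn : ∀ p, 0 ≤ F p := by intro p; rw [hF]; dsimp; split <;> norm_num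
    obtain ⟨hmin, hconst⟩ := hdmp F hFnn u heq
    have huα : ∀ p : ↥α, u p.val = B p q0 := by
      intro p
      rw [hu_α p]
      have : F - (subm A α β).mulVec (0 : ↥β → ℝ) = F := by simp
      rw [this, hF]
      exact mulVec_ind _ _ _
    have huβ : ∀ q : ↥β, u q.val = 0 := fun q => hu_β q
    have hinf : β.inf' hβne u = 0 := by
      obtain ⟨j, hj⟩ := hβne
      apply le_antisymm
      · exact (Finset.inf'_le u hj).trans_eq (huβ ⟨j, hj⟩)
      · exact Finset.le_inf' _ _ fun k hk => (huβ ⟨k, hk⟩).ge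
    have hnn : ∀ p : ↥α, 0 ≤ B p q0 := by
      intro p
      have := hmin p.val p.2
      rwa [hinf, huα p] at this
    rcases lt_or_eq_of_le (hnn p0) with h | h
    · exact h
    exfalso
    have hp0 : u p0.val = 0 := by rw [huα p0, ← h]
    have hall : ∀ k, 0 ≤ u k := by
      intro k
      by_cases hk : k ∈ α
      · rw [show u k = B ⟨k, hk⟩ q0 from huα ⟨k, hk⟩]; exact hnn _
      · rw [huβ ⟨k, hmemβ k hk⟩]
    have hc : ∀ k l, u k = u l :=
      hconst ⟨p0.val, p0.2, fun k => by rw [hp0]; exact hall k⟩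
    obtain ⟨j, hj⟩ := hβne
    have huz : ∀ k, u k = 0 := fun k => (hc k j).trans (huβ ⟨j, hj⟩)
    have hA0 : (fun p : ↥α => u p.val) = 0 := funext fun p => huz _
    have hB0 : (fun q : ↥β => u q.val) = 0 := funext fun q => huz _
    rw [hA0, hB0, Matrix.mulVec_zero, Matrix.mulVec_zero, add_zero] at heq
    have := congrFun heq q0
    rw [hF] at this
    simp at this
  · -- negativity of B * A_αβ
    intro p0 q0
    set v : ↥β → ℝ := fun q => if q = q0 then 1 else 0 with hv
    obtain ⟨u, hu_α, hu_β, heq⟩ := aux_solve α β hdisj hunion A hinv v 0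
    obtain ⟨hmin, hconst⟩ := hdmp 0 (fun _ => le_refl 0) u heq
    have huα : ∀ p : ↥α, u p.val = -((B * subm A α β) p q0) := by
      intro p
      rw [hu_α p]
      have h0 : (0 : ↥α → ℝ) - (subm A α β).mulVec v = -((subm A α β).mulVec v) := by
        simp
      rw [h0, Matrix.mulVec_neg, Matrix.mulVec_mulVec]
      have := mulVec_ind (B * subm A α β) q0 p
      rw [hv]
      simp only [Pi.neg_apply]
      rw [this]
    have huβ : ∀ q : ↥β, u q.val = if q = q0 then 1 else 0 := fun q => hu_β q
    have huq0 : u q0.val = 1 := by rw [huβ q0]; simp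
    by_cases hcase : ∃ j ∈ β, j ≠ (q0 : Fin N)
    · obtain ⟨j, hjβ, hjne⟩ := hcase
      have hjz : u j = 0 := by
        rw [huβ ⟨j, hjβ⟩, if_neg]
        intro h
        exact hjne (Subtype.ext_iff.mp h)
      have hβnn : ∀ k ∈ β, 0 ≤ u k := by
        intro k hk
        rw [huβ ⟨k, hk⟩]; split <;> norm_num
      have hinf : β.inf' hβne u = 0 := by
        apply le_antisymm
        · exact (Finset.inf'_le u hjβ).trans_eq hjz
        · exact Finset.le_inf' _ _ hβnn
      have hnn : ∀ p : ↥α, (B * subm A α β) p q0 ≤ 0 := by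
        intro p
        have := hmin p.val p.2
        rw [hinf, huα p] at this
        linarith
      rcases lt_or_eq_of_le (hnn p0) with h | h
      · exact h
      exfalso
      have hp0 : u p0.val = 0 := by rw [huα p0, h, neg_zero]
      have hall : ∀ k, 0 ≤ u k := by
        intro k
        by_cases hk : k ∈ α
        · rw [show u k = -((B * subm A α β) ⟨k, hk⟩ q0) from huα ⟨k, hk⟩]
          have := hnn ⟨k, hk⟩; linarith
        · exact hβnn k (hmemβ k hk)
      have hc : ∀ k l, u k = u l :=
        hconst ⟨p0.val, p0.2, fun k => by rw [hp0]; exact hall k⟩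
      have : (1 : ℝ) = 0 := by rw [← huq0, ← hjz]; exact hc _ _
      norm_num at this
    · push_neg at hcase
      have hinf : β.inf' hβne u = 1 := by
        apply le_antisymm
        · exact (Finset.inf'_le u q0.2).trans_eq huq0
        · refine Finset.le_inf' _ _ fun k hk => ?_
          have : (⟨k, hk⟩ : ↥β) = q0 := Subtype.ext (hcase k hk)
          rw [show u k = u q0.val from by rw [← this], huq0]
      have := hmin p0.val p0.2
      rw [hinf, huα p0] at this
      linarith
end

section
/- Let N ≥ 2, let {α, β} be a partition of {1,…,N} into nonempty sets, let A be a real N×N matrix with all row sums zero, and let C be an entrywise nonnegative real N×N matrix. Assume (A+C)_{αα} is invertible, (A+C)_{αα}^{-1} is entrywise positive, and (A+C)_{αα}^{-1} (A+C)_{αβ} is entrywise negative. Then for every F ∈ ℝ^α with F entrywise nonnegative and every u ∈ ℝ^N satisfying (A+C)_{αα} u_α + (A+C)_{αβ} u_β = F: (i) min_{i∈α} u_i ≥ −max_{j∈β} u_j⁻; and (ii) if u attains a nonpositive minimum over all of {1,…,N} at some index in α, then u is constant. -/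
/-!
Write `M = (A+C)_{αα}` and `K = (A+C)_{αβ}`. A solution of `M x + K y = g` is
`x = M⁻¹ g - (M⁻¹ K) y`, so by the sign conditions `x ≥ 0` whenever `g ≥ 0` and `y ≥ 0`, and a
single vanishing entry of `x` forces `g = 0` and `y = 0`. Since `A` has zero row sums, adding
`s • 1` to `u` changes the right-hand side by `s • C 1`, which is nonnegative for `s ≥ 0`.
Shifting `u` by `max_β u⁻` gives (i); shifting it by minus its nonpositive minimum gives (ii).
-/

open Matrix Finset

section InteriorBoundary

variable {R ι κ : Type*} [CommRing R] [Fintype ι] [Fintype κ]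

theorem Matrix.eq_inv_mulVec_sub_of_mulVec_add_mulVec_eq [DecidableEq ι]
    {M : Matrix ι ι R} (K : Matrix ι κ R) (hM : IsUnit M) {x : ι → R} {y : κ → R} {g : ι → R}
    (h : M *ᵥ x + K *ᵥ y = g) : x = M⁻¹ *ᵥ g - (M⁻¹ * K) *ᵥ y := by
  have hMinv : M⁻¹ * M = 1 := M.nonsing_inv_mul ((M.isUnit_iff_isUnit_det).mp hM)
  rw [← h, mulVec_add, mulVec_mulVec, mulVec_mulVec, hMinv, one_mulVec, add_sub_cancel_right]

variable [LinearOrder R] [IsStrictOrderedRing R]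

theorem Matrix.mulVec_sub_mulVec_nonneg {P : Matrix ι ι R} {Q : Matrix ι κ R}
    (hP : ∀ i j, 0 ≤ P i j) (hQ : ∀ i j, Q i j ≤ 0) {g : ι → R} (hg : 0 ≤ g) {y : κ → R}
    (hy : 0 ≤ y) : 0 ≤ P *ᵥ g - Q *ᵥ y := by
  intro i
  have hPg : 0 ≤ P i ⬝ᵥ g := dotProduct_nonneg_of_nonneg (hP i) hg
  have hQy : 0 ≤ -Q i ⬝ᵥ y := dotProduct_nonneg_of_nonneg (fun j => neg_nonneg.mpr (hQ i j)) hy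
  simp only [Pi.sub_apply, Pi.zero_apply, mulVec, neg_dotProduct] at hPg hQy ⊢
  linarith

theorem dotProduct_eq_zero_iff_of_pos {a b : ι → R} (ha : ∀ j, 0 < a j) (hb : 0 ≤ b) :
    a ⬝ᵥ b = 0 ↔ b = 0 := by
  refine ⟨fun h => ?_, fun h => by rw [h, dotProduct_zero]⟩
  have hterms := (sum_eq_zero_iff_of_nonneg fun j _ => mul_nonneg (ha j).le (hb j)).mp h
  funext j
  exact (mul_eq_zero.mp (hterms j (mem_univ j))).resolve_left (ha j).ne'

theorem Matrix.eq_zero_of_mulVec_sub_mulVec_apply_eq_zero {P : Matrix ι ι R}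
    {Q : Matrix ι κ R} {i : ι} (hP : ∀ j, 0 < P i j) (hQ : ∀ j, Q i j < 0) {g : ι → R}
    (hg : 0 ≤ g) {y : κ → R} (hy : 0 ≤ y) (h : (P *ᵥ g - Q *ᵥ y) i = 0) : g = 0 ∧ y = 0 := by
  have hPg : 0 ≤ P i ⬝ᵥ g := dotProduct_nonneg_of_nonneg (fun j => (hP j).le) hg
  have hQy : 0 ≤ -Q i ⬝ᵥ y := dotProduct_nonneg_of_nonneg (fun j => (neg_pos.mpr (hQ j)).le) hy
  simp only [Pi.sub_apply, mulVec, neg_dotProduct] at h hQy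
  constructor
  · exact (dotProduct_eq_zero_iff_of_pos hP hg).mp (by linarith)
  · refine (dotProduct_eq_zero_iff_of_pos (a := -Q i) (fun j => neg_pos.mpr (hQ j)) hy).mp ?_
    rw [neg_dotProduct]
    linarith

end InteriorBoundary

section Partition

variable {N : ℕ} {α β : Finset (Fin N)}

theorem subm_mulVec_add_subm_mulVec (hdisj : Disjoint α β) (hunion : α ∪ β = univ)
    (B : Matrix (Fin N) (Fin N) ℝ) (v : Fin N → ℝ) :
    subm B α α *ᵥ (fun p => v p) + subm B α β *ᵥ (fun q => v q) = fun p : α => (B *ᵥ v) p := by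
  funext p
  simp only [Pi.add_apply, mulVec, dotProduct, subm, submatrix_apply]
  rw [sum_coe_sort α fun j => B p j * v j, sum_coe_sort β fun j => B p j * v j,
    ← sum_union hdisj, hunion]

theorem subm_eq_inv_mulVec_sub (hdisj : Disjoint α β) (hunion : α ∪ β = univ)
    {B : Matrix (Fin N) (Fin N) ℝ} (hinv : IsUnit (subm B α α)) (v : Fin N → ℝ) :
    (fun p : α => v p) = (subm B α α)⁻¹ *ᵥ (fun p : α => (B *ᵥ v) p) -
      ((subm B α α)⁻¹ * subm B α β) *ᵥ (fun q : β => v q) :=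
  eq_inv_mulVec_sub_of_mulVec_add_mulVec_eq _ hinv
    (subm_mulVec_add_subm_mulVec hdisj hunion B v)

variable {B : Matrix (Fin N) (Fin N) ℝ} {v : Fin N → ℝ}

theorem nonneg_of_subm_inv_nonneg (hdisj : Disjoint α β) (hunion : α ∪ β = univ)
    (hinv : IsUnit (subm B α α)) (hpos : ∀ p q, 0 ≤ (subm B α α)⁻¹ p q)
    (hneg : ∀ p q, ((subm B α α)⁻¹ * subm B α β) p q ≤ 0)
    (hBv : ∀ i ∈ α, 0 ≤ (B *ᵥ v) i) (hvβ : ∀ j ∈ β, 0 ≤ v j) : ∀ i ∈ α, 0 ≤ v i := by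
  intro i hi
  have hvα := congrFun (subm_eq_inv_mulVec_sub hdisj hunion hinv v) ⟨i, hi⟩
  rw [hvα]
  exact mulVec_sub_mulVec_nonneg hpos hneg (fun p => hBv p p.2) (fun q => hvβ q q.2) ⟨i, hi⟩

theorem eq_zero_of_subm_inv_pos (hdisj : Disjoint α β) (hunion : α ∪ β = univ)
    (hinv : IsUnit (subm B α α)) (hpos : ∀ p q, 0 < (subm B α α)⁻¹ p q)
    (hneg : ∀ p q, ((subm B α α)⁻¹ * subm B α β) p q < 0)
    (hBv : ∀ i ∈ α, 0 ≤ (B *ᵥ v) i) (hvβ : ∀ j ∈ β, 0 ≤ v j) {i : Fin N} (hi : i ∈ α)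
    (hvi : v i = 0) : v = 0 := by
  have hvα := subm_eq_inv_mulVec_sub hdisj hunion hinv v
  obtain ⟨hBv0, hvβ0⟩ := eq_zero_of_mulVec_sub_mulVec_apply_eq_zero (hpos ⟨i, hi⟩)
    (hneg ⟨i, hi⟩) (fun p => hBv p p.2) (fun q => hvβ q q.2)
    (by rw [← congrFun hvα ⟨i, hi⟩]; exact hvi)
  rw [hBv0, hvβ0, mulVec_zero, mulVec_zero, sub_zero] at hvα
  funext k
  rcases mem_union.mp (hunion ▸ mem_univ k : k ∈ α ∪ β) with hk | hk
  · exact congrFun hvα ⟨k, hk⟩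
  · exact congrFun hvβ0 ⟨k, hk⟩

end Partition

theorem Matrix.add_mulVec_add_smul_one {R n : Type*} [CommRing R] [Fintype n]
    {A : Matrix n n R} (hrow : ∀ i, ∑ j, A i j = 0) (C : Matrix n n R) (u : n → R) (s : R) :
    (A + C) *ᵥ (u + s • 1) = (A + C) *ᵥ u + s • C *ᵥ 1 := by
  have hA : A *ᵥ 1 = 0 := funext fun i => by simpa [mulVec, dotProduct] using hrow i
  rw [mulVec_add, mulVec_smul, add_mulVec A C 1, hA, zero_add]

theorem sDMP_B_of_matrix_conditions_general {N : ℕ}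
    (α β : Finset (Fin N)) (hdisj : Disjoint α β) (hunion : α ∪ β = Finset.univ)
    (hβne : β.Nonempty)
    (A C : Matrix (Fin N) (Fin N) ℝ)
    (hrow : ∀ i, ∑ j, A i j = 0)
    (hC : ∀ i j, 0 ≤ C i j)
    (hinv : IsUnit (subm (A + C) α α))
    (hpos : ∀ p q, 0 < (subm (A + C) α α)⁻¹ p q)
    (hneg : ∀ p q, ((subm (A + C) α α)⁻¹ * subm (A + C) α β) p q < 0) :
    ∀ (F : ↥α → ℝ), (∀ p, 0 ≤ F p) →
      ∀ u : Fin N → ℝ,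
        (subm (A + C) α α).mulVec (fun p => u p.val) +
          (subm (A + C) α β).mulVec (fun q => u q.val) = F →
        (∀ i ∈ α, -(β.sup' hβne fun j => max (-(u j)) 0) ≤ u i) ∧
        ((∃ i ∈ α, u i ≤ 0 ∧ ∀ k, u i ≤ u k) → ∀ k l, u k = u l) := by
  intro F hF u hu
  rw [subm_mulVec_add_subm_mulVec hdisj hunion] at hu
  have hshift : ∀ s : ℝ, 0 ≤ s → ∀ i ∈ α, 0 ≤ ((A + C) *ᵥ (u + s • 1)) i := fun s hs i hi => by
    have hFi : ((A + C) *ᵥ u) i = F ⟨i, hi⟩ := congrFun hu ⟨i, hi⟩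
    rw [add_mulVec_add_smul_one hrow, Pi.add_apply, hFi]
    exact add_nonneg (hF _) (smul_nonneg hs (dotProduct_nonneg_of_nonneg (hC i) zero_le_one))
  constructor
  · set m := β.sup' hβne fun j => max (-(u j)) 0
    have hle_m : ∀ j ∈ β, max (-(u j)) 0 ≤ m := fun j hj => le_sup' (fun j => max (-(u j)) 0) hj
    have hm : 0 ≤ m := (le_max_right _ _).trans (hle_m _ hβne.choose_spec)
    have hvβ : ∀ j ∈ β, 0 ≤ (u + m • 1) j := fun j hj => by
      have := (le_max_left _ _).trans (hle_m j hj)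
      simp only [Pi.add_apply, Pi.smul_apply, Pi.one_apply, smul_eq_mul, mul_one]
      linarith
    intro i hi
    have := nonneg_of_subm_inv_nonneg hdisj hunion hinv (fun p q => (hpos p q).le)
      (fun p q => (hneg p q).le) (hshift m hm) hvβ i hi
    simp only [Pi.add_apply, Pi.smul_apply, Pi.one_apply, smul_eq_mul, mul_one] at this
    linarith
  · rintro ⟨i, hi, hui, hmin⟩ k l
    have hv : ∀ j, 0 ≤ (u + (-u i) • 1) j := fun j => by simpa [sub_nonneg] using hmin j
    have hv0 := eq_zero_of_subm_inv_pos hdisj hunion hinv hpos hneg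
      (hshift (-u i) (neg_nonneg.mpr hui)) (fun j _ => hv j) hi (by simp)
    have hconst : ∀ j, u j = u i := fun j => by
      have := congrFun hv0 j
      simp only [Pi.add_apply, Pi.smul_apply, Pi.one_apply, smul_eq_mul, mul_one,
        Pi.zero_apply] at this
      linarith
    rw [hconst k, hconst l]

/-- Matrix form of the strong discrete maximum principle sDMP-B:
sufficiency of the sign conditions on `(A+C)_{αα}⁻¹` and `(A+C)_{αα}⁻¹ (A+C)_{αβ}`. -/
theorem sDMP_B_of_matrix_conditions {N : ℕ} (hN : 2 ≤ N)
    (α β : Finset (Fin N)) (hdisj : Disjoint α β) (hunion : α ∪ β = Finset.univ)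
    (hαne : α.Nonempty) (hβne : β.Nonempty)
    (A C : Matrix (Fin N) (Fin N) ℝ)
    (hrow : ∀ i, ∑ j, A i j = 0)
    (hC : ∀ i j, 0 ≤ C i j)
    (hinv : IsUnit (subm (A + C) α α))
    (hpos : ∀ p q, 0 < (subm (A + C) α α)⁻¹ p q)
    (hneg : ∀ p q, ((subm (A + C) α α)⁻¹ * subm (A + C) α β) p q < 0) :
    ∀ (F : ↥α → ℝ), (∀ p, 0 ≤ F p) →
      ∀ u : Fin N → ℝ,
        (subm (A + C) α α).mulVec (fun p => u p.val) +
          (subm (A + C) α β).mulVec (fun q => u q.val) = F →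
        (∀ i ∈ α, -(β.sup' hβne fun j => max (-(u j)) 0) ≤ u i) ∧
        ((∃ i ∈ α, u i ≤ 0 ∧ ∀ k, u i ≤ u k) → ∀ k l, u k = u l) :=
  sDMP_B_of_matrix_conditions_general α β hdisj hunion hβne A C hrow hC hinv hpos hneg
end

section
/- Let N ≥ 2, let {α, β} be a partition of {1,…,N} into nonempty sets, let A be a real N×N matrix with all row sums zero, and let C be an entrywise nonnegative real N×N matrix such that (A+C)_{αα} is invertible. Suppose that for every F ∈ ℝ^α with F entrywise nonnegative and every u ∈ ℝ^N satisfying (A+C)_{αα} u_α + (A+C)_{αβ} u_β = F, one has min_{i∈α} u_i ≥ −max_{j∈β} u_j⁻, and u is constant whenever u attains a nonpositive minimum over all of {1,…,N} at some index in α. Then (A+C)_{αα}^{-1} is entrywise positive and (A+C)_{αα}^{-1} (A+C)_{αβ} is entrywise negative. -/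
open Matrix Finset

/-- Matrix form of the strong discrete maximum principle sDMP-B:
necessity of the sign conditions on `(A+C)_{αα}⁻¹` and `(A+C)_{αα}⁻¹ (A+C)_{αβ}`. -/
theorem matrix_conditions_of_sDMP_B {N : ℕ} (hN : 2 ≤ N)
    (α β : Finset (Fin N)) (hdisj : Disjoint α β) (hunion : α ∪ β = Finset.univ)
    (hαne : α.Nonempty) (hβne : β.Nonempty)
    (A C : Matrix (Fin N) (Fin N) ℝ)
    (hrow : ∀ i, ∑ j, A i j = 0)
    (hC : ∀ i j, 0 ≤ C i j)
    (hinv : IsUnit (subm (A + C) α α))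
    (hdmp : ∀ (F : ↥α → ℝ), (∀ p, 0 ≤ F p) →
      ∀ u : Fin N → ℝ,
        (subm (A + C) α α).mulVec (fun p => u p.val) +
          (subm (A + C) α β).mulVec (fun q => u q.val) = F →
        (∀ i ∈ α, -(β.sup' hβne fun j => max (-(u j)) 0) ≤ u i) ∧
        ((∃ i ∈ α, u i ≤ 0 ∧ ∀ k, u i ≤ u k) → ∀ k l, u k = u l)) :
    (∀ p q, 0 < (subm (A + C) α α)⁻¹ p q) ∧
    (∀ p q, ((subm (A + C) α α)⁻¹ * subm (A + C) α β) p q < 0) := by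
  classical
  set B := subm (A + C) α α with hBdef
  set D := subm (A + C) α β with hDdef
  have hdet : IsUnit B.det := (Matrix.isUnit_iff_isUnit_det _).mp hinv
  have hBB : B * B⁻¹ = 1 := Matrix.mul_nonsing_inv _ hdet
  have hmemβ : ∀ i : Fin N, i ∉ α → i ∈ β := by
    intro i hi
    have h : i ∈ α ∪ β := hunion ▸ Finset.mem_univ i
    exact (Finset.mem_union.mp h).resolve_left hi
  have hmemα : ∀ i : Fin N, i ∈ β → i ∉ α := fun i hi hα =>
    (Finset.disjoint_left.mp hdisj hα) hi
  constructor
  · intro p q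
    set v : ↥α → ℝ := fun r => B⁻¹ r q with hv
    set u : Fin N → ℝ := fun i => if h : i ∈ α then v ⟨i, h⟩ else 0 with hu
    have huα : ∀ r : ↥α, u r.val = v r := fun r => by
      simp only [hu, r.prop, dif_pos]
    have huβ : ∀ j : Fin N, j ∈ β → u j = 0 := fun j hj => by
      simp only [hu, hmemα j hj, dif_neg, not_false_iff]
    set F : ↥α → ℝ := fun r => if r = q then 1 else 0 with hF
    have hFpos : ∀ r, 0 ≤ F r := fun r => by
      simp only [hF]; split <;> norm_num
    have h1 : (fun r : ↥α => u r.val) = v := funext huα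
    have h2 : (fun j : ↥β => u j.val) = fun _ => (0:ℝ) :=
      funext fun j => huβ j.val j.prop
    have heq : B.mulVec (fun p => u p.val) + D.mulVec (fun q' => u q'.val) = F := by
      rw [h1, h2]
      funext r
      have hBv : B.mulVec v r = (B * B⁻¹) r q := by
        simp [Matrix.mulVec, dotProduct, Matrix.mul_apply, hv]
      have hD0 : D.mulVec (fun _ => (0:ℝ)) r = 0 := by
        simp [Matrix.mulVec, dotProduct]
      rw [Pi.add_apply, hBv, hBB, hD0, add_zero]
      simp [Matrix.one_apply, hF]
    obtain ⟨hmin, hconst⟩ := hdmp F hFpos u heq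
    have hsup : (β.sup' hβne fun j => max (-(u j)) 0) ≤ 0 :=
      Finset.sup'_le _ _ fun j hj => by rw [huβ j hj]; simp
    have hnonneg : ∀ k, 0 ≤ u k := by
      intro k
      by_cases hk : k ∈ α
      · have := hmin k hk; linarith
      · rw [huβ k (hmemβ k hk)]
    by_contra hle
    push_neg at hle
    have hup0 : u p.val = 0 := by
      have h1' : u p.val ≤ 0 := by rw [huα p]; exact hle
      exact le_antisymm h1' (hnonneg _)
    have hall : ∀ k l, u k = u l :=
      hconst ⟨p.val, p.prop, by rw [hup0], fun k => hup0 ▸ hnonneg k⟩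
    obtain ⟨j₀, hj₀⟩ := hβne
    have hzero : ∀ k, u k = 0 := fun k => (hall k j₀).trans (huβ j₀ hj₀)
    have := congrFun heq q
    simp only [Pi.add_apply, h1, h2] at this
    have hv0 : v = fun _ => (0:ℝ) := funext fun r => by
      rw [← huα r]; exact hzero r.val
    rw [hv0] at this
    simp [Matrix.mulVec, dotProduct, hF] at this
  · intro p q
    set v : ↥α → ℝ := fun r => -((B⁻¹ * D) r q) with hv
    set w : ↥β → ℝ := fun s => if s = q then 1 else 0 with hw
    set u : Fin N → ℝ := fun i =>
      if h : i ∈ α then v ⟨i, h⟩ else w ⟨i, hmemβ i h⟩ with hu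
    have huα : ∀ r : ↥α, u r.val = v r := fun r => by
      simp only [hu, r.prop, dif_pos]
    have huβ : ∀ j : ↥β, u j.val = w j := fun j => by
      have : (j : Fin N) ∉ α := hmemα j.val j.prop
      simp only [hu, this, dif_neg, not_false_iff]
    have hwnn : ∀ j : ↥β, 0 ≤ w j := fun j => by
      simp only [hw]; split <;> norm_num
    have h1 : (fun r : ↥α => u r.val) = v := funext huα
    have h2 : (fun j : ↥β => u j.val) = w := funext huβ
    have heq : B.mulVec (fun p => u p.val) + D.mulVec (fun q' => u q'.val)
        = fun _ => (0:ℝ) := by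
      rw [h1, h2]
      funext r
      have hBv : B.mulVec v r = -((B * (B⁻¹ * D)) r q) := by
        simp [Matrix.mulVec, dotProduct, Matrix.mul_apply, hv, mul_neg,
          Finset.sum_neg_distrib]
      have hBD : B * (B⁻¹ * D) = D := by
        rw [← Matrix.mul_assoc, hBB, Matrix.one_mul]
      have hDw : D.mulVec w r = D r q := by
        simp [Matrix.mulVec, dotProduct, hw, mul_ite]
      rw [Pi.add_apply, hBv, hBD, hDw]
      ring
    obtain ⟨hmin, hconst⟩ := hdmp (fun _ => 0) (fun _ => le_rfl) u heq
    have hsup : (β.sup' hβne fun j => max (-(u j)) 0) ≤ 0 :=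
      Finset.sup'_le _ _ fun j hj => by
        have : u j = w ⟨j, hj⟩ := huβ ⟨j, hj⟩
        rw [this]
        have := hwnn ⟨j, hj⟩
        simp only [max_le_iff]
        constructor <;> linarith
    have hnonneg : ∀ k, 0 ≤ u k := by
      intro k
      by_cases hk : k ∈ α
      · have := hmin k hk; linarith
      · have hk' : k ∈ β := hmemβ k hk
        have : u k = w ⟨k, hk'⟩ := huβ ⟨k, hk'⟩
        rw [this]; exact hwnn _
    by_contra hle
    push_neg at hle
    have hup0 : u p.val = 0 := by
      have h1' : u p.val ≤ 0 := by rw [huα p]; simp [hv]; linarith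
      exact le_antisymm h1' (hnonneg _)
    have hall : ∀ k l, u k = u l :=
      hconst ⟨p.val, p.prop, by rw [hup0], fun k => hup0 ▸ hnonneg k⟩
    have h1' : u q.val = u p.val := hall q.val p.val
    rw [hup0, huβ q] at h1'
    simp [hw] at h1'
end

section
/- Let N ≥ 2, let {α, β} be a partition of {1,…,N} into nonempty sets, let A be a real N×N matrix with all row sums zero, and let C be an entrywise nonpositive real N×N matrix. Assume (A+C)_{αα} is invertible, (A+C)_{αα}^{-1} is entrywise positive, and (A+C)_{αα}^{-1} (A+C)_{αβ} is entrywise negative. Then for every F ∈ ℝ^α with F entrywise nonnegative and every u ∈ ℝ^N satisfying (A+C)_{αα} u_α + (A+C)_{αβ} u_β = F and u_j ≥ 0 for all j ∈ β: (i) min_{i∈α} u_i ≥ min_{j∈β} u_j; and (ii) if the minimum of u over all of {1,…,N} is attained at some index in α, then u is constant. -/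
open Matrix Finset

/-- Matrix form of the restricted strong discrete maximum principle sDMP-R:
the sign conditions on `(A+C)_{αα}⁻¹` and `(A+C)_{αα}⁻¹ (A+C)_{αβ}`, with an
entrywise nonpositive reaction matrix `C`, imply the strong maximum principle
for solutions with nonnegative boundary values. -/
theorem sDMP_R_of_matrix_conditions {N : ℕ} (hN : 2 ≤ N)
    (α β : Finset (Fin N)) (hdisj : Disjoint α β) (hunion : α ∪ β = Finset.univ)
    (hαne : α.Nonempty) (hβne : β.Nonempty)
    (A C : Matrix (Fin N) (Fin N) ℝ)
    (hrow : ∀ i, ∑ j, A i j = 0)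
    (hC : ∀ i j, C i j ≤ 0)
    (hinv : IsUnit (subm (A + C) α α))
    (hpos : ∀ p q, 0 < (subm (A + C) α α)⁻¹ p q)
    (hneg : ∀ p q, ((subm (A + C) α α)⁻¹ * subm (A + C) α β) p q < 0) :
    ∀ (F : ↥α → ℝ), (∀ p, 0 ≤ F p) →
      ∀ u : Fin N → ℝ,
        (subm (A + C) α α).mulVec (fun p => u p.val) +
          (subm (A + C) α β).mulVec (fun q => u q.val) = F →
        (∀ j ∈ β, 0 ≤ u j) →
        (∀ i ∈ α, β.inf' hβne u ≤ u i) ∧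
        ((∃ i ∈ α, ∀ k, u i ≤ u k) → ∀ k l, u k = u l) := by
  intro F hF u heq huβ
  haveI : Nonempty ↥α := ⟨⟨hαne.choose, hαne.choose_spec⟩⟩
  haveI : Nonempty ↥β := ⟨⟨hβne.choose, hβne.choose_spec⟩⟩
  set B := subm (A + C) α α with hBdef
  set D := subm (A + C) α β with hDdef
  have hdet : IsUnit B.det := (Matrix.isUnit_iff_isUnit_det B).mp hinv
  have hBinvB : B⁻¹ * B = 1 := Matrix.nonsing_inv_mul B hdet
  set S : Matrix ↥α ↥β ℝ := -(B⁻¹ * D) with hSdef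
  have hSpos : ∀ p q, 0 < S p q := fun p q => by
    simpa [hSdef] using hneg p q
  -- key identity
  have hkey : ∀ p : ↥α,
      u p.val = B⁻¹.mulVec F p + ∑ q : ↥β, S p q * u q.val := by
    intro p
    have h1 := congrArg (fun v => B⁻¹.mulVec v) heq
    simp only [Matrix.mulVec_add, Matrix.mulVec_mulVec, hBinvB,
      Matrix.one_mulVec] at h1
    have h2 := congrFun h1 p
    simp only [Pi.add_apply] at h2
    have h3 : ∑ q : ↥β, S p q * u q.val
        = -((B⁻¹ * D).mulVec (fun q => u q.val)) p := by
      simp [hSdef, Matrix.mulVec, dotProduct, neg_mul,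
        Finset.sum_neg_distrib]
    rw [h3]
    linarith
  -- row sums
  have hsplit : ∀ f : Fin N → ℝ,
      ∑ j, f j = ∑ j : ↥α, f j.val + ∑ j : ↥β, f j.val := by
    intro f
    rw [Finset.sum_coe_sort, Finset.sum_coe_sort, ← Finset.sum_union hdisj,
      hunion]
  set c : ↥α → ℝ := fun p => ∑ j, C p.val j with hcdef
  have hc : ∀ p, c p ≤ 0 := fun p =>
    Finset.sum_nonpos fun j _ => hC p.val j
  have hrow2 : ∀ p : ↥α, (∑ q : ↥α, B p q) + (∑ q : ↥β, D p q) = c p := by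
    intro p
    have h1 : ∑ j, (A + C) p.val j = c p := by
      simp [Finset.sum_add_distrib, hrow p.val, hcdef]
    rw [hsplit] at h1
    simpa [hBdef, hDdef, subm] using h1
  have hone : B.mulVec (fun _ => (1 : ℝ)) + D.mulVec (fun _ => (1 : ℝ)) = c := by
    funext p
    have := hrow2 p
    simp only [Pi.add_apply, Matrix.mulVec, dotProduct, mul_one]
    linarith
  have hrs : ∀ p : ↥α, ∑ q : ↥β, S p q = 1 - B⁻¹.mulVec c p := by
    intro p
    have h1 := congrArg (fun v => B⁻¹.mulVec v) hone
    simp only [Matrix.mulVec_add, Matrix.mulVec_mulVec, hBinvB,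
      Matrix.one_mulVec] at h1
    have h2 := congrFun h1 p
    simp only [Pi.add_apply] at h2
    have h3 : ((B⁻¹ * D).mulVec (fun _ => (1:ℝ))) p = -∑ q : ↥β, S p q := by
      simp [hSdef, Matrix.mulVec, dotProduct, neg_mul,
        Finset.sum_neg_distrib]
    rw [h3] at h2
    linarith
  have hBc : ∀ p : ↥α, B⁻¹.mulVec c p ≤ 0 := by
    intro p
    simp only [Matrix.mulVec, dotProduct]
    exact Finset.sum_nonpos fun q _ =>
      mul_nonpos_of_nonneg_of_nonpos (hpos p q).le (hc q)
  have hr1 : ∀ p : ↥α, 1 ≤ ∑ q : ↥β, S p q := by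
    intro p
    rw [hrs p]
    linarith [hBc p]
  have hBF : ∀ p : ↥α, 0 ≤ B⁻¹.mulVec F p := by
    intro p
    simp only [Matrix.mulVec, dotProduct]
    exact Finset.sum_nonneg fun q _ => mul_nonneg (hpos p q).le (hF q)
  constructor
  · -- part (i)
    intro i hi
    set m := β.inf' hβne u with hmdef
    obtain ⟨j0, hj0, hj0e⟩ := Finset.exists_mem_eq_inf' hβne u
    have hm0 : 0 ≤ m := by rw [hmdef, hj0e]; exact huβ j0 hj0
    have hmle : ∀ q : ↥β, m ≤ u q.val := fun q => Finset.inf'_le u q.2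
    have h2 : m ≤ ∑ q : ↥β, S ⟨i, hi⟩ q * u q.val := by
      calc m ≤ (∑ q : ↥β, S ⟨i, hi⟩ q) * m :=
              le_mul_of_one_le_left hm0 (hr1 _)
        _ = ∑ q : ↥β, S ⟨i, hi⟩ q * m := by rw [Finset.sum_mul]
        _ ≤ ∑ q : ↥β, S ⟨i, hi⟩ q * u q.val :=
              Finset.sum_le_sum fun q _ =>
                mul_le_mul_of_nonneg_left (hmle q) (hSpos _ q).le
    have := hkey ⟨i, hi⟩
    have := hBF ⟨i, hi⟩
    linarith
  · -- part (ii)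
    rintro ⟨i, hi, hmin⟩
    set p0 : ↥α := ⟨i, hi⟩ with hp0
    set m := u i with hmdef
    have hmle : ∀ k, m ≤ u k := hmin
    have hm0 : 0 ≤ m := by
      have h1 := hkey p0
      have h2 : 0 ≤ ∑ q : ↥β, S p0 q * u q.val :=
        Finset.sum_nonneg fun q _ =>
          mul_nonneg (hSpos p0 q).le (huβ q.val q.2)
      have := hBF p0
      simp only [hp0] at h1
      linarith
    have hsum_formula : ∀ p : ↥α,
        m ≤ ∑ q : ↥β, S p q * u q.val := by
      intro p
      calc m ≤ (∑ q : ↥β, S p q) * m := le_mul_of_one_le_left hm0 (hr1 _)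
        _ = ∑ q : ↥β, S p q * m := by rw [Finset.sum_mul]
        _ ≤ ∑ q : ↥β, S p q * u q.val :=
              Finset.sum_le_sum fun q _ =>
                mul_le_mul_of_nonneg_left (hmle q.val) (hSpos _ q).le
    have hkey0 := hkey p0
    have hBF0le : B⁻¹.mulVec F p0 ≤ 0 := by
      have := hsum_formula p0
      simp only [hp0] at hkey0
      linarith
    have hBF0 : B⁻¹.mulVec F p0 = 0 := le_antisymm hBF0le (hBF p0)
    -- F = 0
    have hF0 : ∀ q : ↥α, F q = 0 := by
      have h1 : ∑ q : ↥α, B⁻¹ p0 q * F q = 0 := by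
        have : B⁻¹.mulVec F p0 = ∑ q : ↥α, B⁻¹ p0 q * F q := by
          simp [Matrix.mulVec, dotProduct]
        linarith [hBF0, this]
      intro q
      have h2 := (Finset.sum_eq_zero_iff_of_nonneg
        (fun q _ => mul_nonneg (hpos p0 q).le (hF q))).mp h1 q (Finset.mem_univ q)
      rcases mul_eq_zero.mp h2 with h | h
      · exact absurd h (ne_of_gt (hpos p0 q))
      · exact h
    have hBFall : ∀ p : ↥α, B⁻¹.mulVec F p = 0 := by
      intro p
      simp [Matrix.mulVec, dotProduct, hF0]
    -- u = m on β
    have hSumEq : ∑ q : ↥β, S p0 q * u q.val = m := by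
      simp only [hp0] at hkey0
      linarith [hBF0]
    have hterm0 : ∑ q : ↥β, S p0 q * (u q.val - m) = 0 := by
      have hexp : ∑ q : ↥β, S p0 q * (u q.val - m)
          = (∑ q : ↥β, S p0 q * u q.val) - (∑ q : ↥β, S p0 q) * m := by
        rw [Finset.sum_mul, ← Finset.sum_sub_distrib]
        congr 1; funext q; ring
      have hge : 0 ≤ ∑ q : ↥β, S p0 q * (u q.val - m) :=
        Finset.sum_nonneg fun q _ =>
          mul_nonneg (hSpos p0 q).le (by linarith [hmle q.val])
      have hle : (∑ q : ↥β, S p0 q * u q.val) - (∑ q : ↥β, S p0 q) * m ≤ 0 := by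
        have := le_mul_of_one_le_left hm0 (hr1 p0)
        linarith [hSumEq]
      linarith [hexp ▸ hge, hexp ▸ hle]
    have huβm : ∀ q : ↥β, u q.val = m := by
      intro q
      have h2 := (Finset.sum_eq_zero_iff_of_nonneg
        (fun q _ => mul_nonneg (hSpos p0 q).le
          (by linarith [hmle q.val] : (0:ℝ) ≤ u q.val - m))).mp hterm0 q
        (Finset.mem_univ q)
      rcases mul_eq_zero.mp h2 with h | h
      · exact absurd h (ne_of_gt (hSpos p0 q))
      · linarith
    have hrm : (∑ q : ↥β, S p0 q) * m = m := by
      have hexp : ∑ q : ↥β, S p0 q * (u q.val - m)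
          = (∑ q : ↥β, S p0 q * u q.val) - (∑ q : ↥β, S p0 q) * m := by
        rw [Finset.sum_mul, ← Finset.sum_sub_distrib]
        congr 1; funext q; ring
      rw [hexp] at hterm0
      linarith [hSumEq]
    -- u constant
    have hall : ∀ k, u k = m := by
      by_cases hm : m = 0
      · intro k
        have hk : k ∈ α ∨ k ∈ β :=
          Finset.mem_union.mp (hunion ▸ Finset.mem_univ k)
        rcases hk with hk | hk
        · have h1 := hkey ⟨k, hk⟩
          rw [hBFall] at h1
          have h2 : ∑ q : ↥β, S ⟨k, hk⟩ q * u q.val = 0 := by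
            apply Finset.sum_eq_zero
            intro q _
            rw [huβm q, hm, mul_zero]
          rw [hm]; linarith
        · rw [hm] at huβm ⊢; exact huβm ⟨k, hk⟩
      · have hmpos : 0 < m := lt_of_le_of_ne hm0 (Ne.symm hm)
        have hr0 : ∑ q : ↥β, S p0 q = 1 := by
          have : ((∑ q : ↥β, S p0 q) - 1) * m = 0 := by ring_nf; linarith [hrm]
          rcases mul_eq_zero.mp this with h | h
          · linarith
          · exact absurd h hm
        have hBc0 : B⁻¹.mulVec c p0 = 0 := by
          have := hrs p0
          rw [hr0] at this
          linarith
        have hc0 : ∀ q : ↥α, c q = 0 := by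
          have h1 : ∑ q : ↥α, -(B⁻¹ p0 q * c q) = 0 := by
            have : B⁻¹.mulVec c p0 = ∑ q : ↥α, B⁻¹ p0 q * c q := by
              simp [Matrix.mulVec, dotProduct]
            rw [this] at hBc0
            rw [Finset.sum_neg_distrib, hBc0, neg_zero]
          intro q
          have h2 := (Finset.sum_eq_zero_iff_of_nonneg
            (fun q _ => neg_nonneg.mpr
              (mul_nonpos_of_nonneg_of_nonpos (hpos p0 q).le (hc q)))).mp h1 q
            (Finset.mem_univ q)
          have h3 : B⁻¹ p0 q * c q = 0 := by linarith [h2]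
          rcases mul_eq_zero.mp h3 with h | h
          · exact absurd h (ne_of_gt (hpos p0 q))
          · exact h
        have hrall : ∀ p : ↥α, ∑ q : ↥β, S p q = 1 := by
          intro p
          rw [hrs p]
          have : B⁻¹.mulVec c p = 0 := by
            simp [Matrix.mulVec, dotProduct, hc0]
          rw [this]; ring
        intro k
        have hk : k ∈ α ∨ k ∈ β :=
          Finset.mem_union.mp (hunion ▸ Finset.mem_univ k)
        rcases hk with hk | hk
        · have h1 := hkey ⟨k, hk⟩
          rw [hBFall] at h1
          have h2 : ∑ q : ↥β, S ⟨k, hk⟩ q * u q.val = m := by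
            calc ∑ q : ↥β, S ⟨k, hk⟩ q * u q.val
                = ∑ q : ↥β, S ⟨k, hk⟩ q * m := by
                  apply Finset.sum_congr rfl; intro q _; rw [huβm q]
              _ = (∑ q : ↥β, S ⟨k, hk⟩ q) * m := by rw [Finset.sum_mul]
              _ = m := by rw [hrall]; ring
          linarith
        · exact huβm ⟨k, hk⟩
    intro k l
    rw [hall k, hall l]
end

section
/- Let N ≥ 2, let {α, β} be a partition of {1,…,N} into nonempty sets, and let A be a real N×N matrix with all row sums zero. Assume A_{αα} is invertible, A_{αα}^{-1} is entrywise positive, and A_{αα}^{-1} A_{αβ} is entrywise negative. Then for every F ∈ ℝ^α with F entrywise nonnegative and every u ∈ ℝ^N satisfying A_{αα} u_α + A_{αβ} u_β = F: min_{1≤k≤N} u_k ≥ −max_{j∈β} u_j⁻; and if some i ∈ α satisfies u_i = −max_{j∈β} u_j⁻, then u is constant. -/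
open Matrix Finset

/-- Matrix form of the observation that the sign conditions characterizing
sDMP-A also imply the strong discrete maximum principle sDMP-B. -/
theorem sDMP_A_implies_sDMP_B {N : ℕ} (hN : 2 ≤ N)
    (α β : Finset (Fin N)) (hdisj : Disjoint α β) (hunion : α ∪ β = Finset.univ)
    (hαne : α.Nonempty) (hβne : β.Nonempty)
    (A : Matrix (Fin N) (Fin N) ℝ)
    (hrow : ∀ i, ∑ j, A i j = 0)
    (hinv : IsUnit (subm A α α))
    (hpos : ∀ p q, 0 < (subm A α α)⁻¹ p q)
    (hneg : ∀ p q, ((subm A α α)⁻¹ * subm A α β) p q < 0) :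
    ∀ (F : ↥α → ℝ), (∀ p, 0 ≤ F p) →
      ∀ u : Fin N → ℝ,
        (subm A α α).mulVec (fun p => u p.val) +
          (subm A α β).mulVec (fun q => u q.val) = F →
        (∀ k, -(β.sup' hβne fun j => max (-(u j)) 0) ≤ u k) ∧
        ((∃ i ∈ α, u i = -(β.sup' hβne fun j => max (-(u j)) 0)) →
          ∀ k l, u k = u l) := by
  intro F hF u hu
  set M := β.sup' hβne fun j => max (-(u j)) 0 with hMdef
  set S := subm A α α with hSdef
  set B := (subm A α α)⁻¹ with hBdef
  set T := subm A α β with hTdef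
  set C := B * T with hCdef
  have hdet : IsUnit S.det := (Matrix.isUnit_iff_isUnit_det S).mp hinv
  have hBS : B * S = 1 := Matrix.nonsing_inv_mul S hdet
  -- solve for u on α
  have hsolve : ∀ p : ↥α, u p =
      (∑ r : ↥α, B p r * F r) - ∑ q : ↥β, C p q * u q := by
    have h1 : B.mulVec (S.mulVec (fun p : ↥α => u p.val)
        + T.mulVec (fun q : ↥β => u q.val)) = B.mulVec F := by rw [hu]
    rw [Matrix.mulVec_add, Matrix.mulVec_mulVec, Matrix.mulVec_mulVec, hBS,
      Matrix.one_mulVec] at h1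
    intro p
    have h2 := congrFun h1 p
    simp only [Pi.add_apply, Matrix.mulVec, dotProduct, hCdef] at h2 ⊢
    linarith [h2]
  -- row sums on the submatrices
  have hrowsub : ∀ p : ↥α, ∑ q : ↥β, T p q = -∑ s : ↥α, S p s := by
    intro p
    have h0 := hrow p.val
    rw [← hunion, Finset.sum_union hdisj] at h0
    have ha : ∑ s : ↥α, S p s = ∑ j ∈ α, A p.val j :=
      Finset.sum_coe_sort α (fun j => A p.val j)
    have hb : ∑ q : ↥β, T p q = ∑ j ∈ β, A p.val j :=
      Finset.sum_coe_sort β (fun j => A p.val j)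
    rw [ha, hb]; linarith
  have hC1 : ∀ p : ↥α, ∑ q : ↥β, C p q = -1 := by
    intro p
    calc ∑ q : ↥β, C p q = ∑ q : ↥β, ∑ r : ↥α, B p r * T r q := by
          simp [hCdef, Matrix.mul_apply]
      _ = ∑ r : ↥α, ∑ q : ↥β, B p r * T r q := Finset.sum_comm
      _ = ∑ r : ↥α, B p r * ∑ q : ↥β, T r q := by
          simp [Finset.mul_sum]
      _ = -∑ r : ↥α, ∑ s : ↥α, B p r * S r s := by
          simp only [hrowsub, mul_neg, Finset.mul_sum, Finset.sum_neg_distrib]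
      _ = -∑ s : ↥α, ∑ r : ↥α, B p r * S r s := by rw [Finset.sum_comm]
      _ = -∑ s : ↥α, (B * S) p s := by simp [Matrix.mul_apply]
      _ = -1 := by rw [hBS]; simp [Matrix.one_apply]
  -- basic facts about M
  have hMle : ∀ j ∈ β, -M ≤ u j := by
    intro j hj
    have h1 : max (-(u j)) 0 ≤ M := Finset.le_sup' (fun j => max (-(u j)) 0) hj
    have h2 : -(u j) ≤ max (-(u j)) 0 := le_max_left _ _
    linarith
  have hM0 : 0 ≤ M := by
    obtain ⟨j, hj⟩ := hβne
    have h1 : max (-(u j)) 0 ≤ M := Finset.le_sup' (fun j => max (-(u j)) 0) hj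
    have h2 : (0:ℝ) ≤ max (-(u j)) 0 := le_max_right _ _
    linarith
  -- the key identity
  have key : ∀ p : ↥α, u p + M =
      (∑ r : ↥α, B p r * F r) + ∑ q : ↥β, (-(C p q)) * (u q + M) := by
    intro p
    have hsum : ∑ q : ↥β, (-(C p q)) * (u q + M)
        = -(∑ q : ↥β, C p q * u q) + (-(∑ q : ↥β, C p q)) * M := by
      rw [← Finset.sum_neg_distrib, ← Finset.sum_neg_distrib, Finset.sum_mul,
        ← Finset.sum_add_distrib]
      exact Finset.sum_congr rfl (fun q _ => by ring)
    rw [hsum, hC1 p]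
    have := hsolve p
    linarith
  -- nonnegativity of the pieces
  have hBF : ∀ p : ↥α, 0 ≤ ∑ r : ↥α, B p r * F r := fun p =>
    Finset.sum_nonneg fun r _ => mul_nonneg (hpos p r).le (hF r)
  have hterm : ∀ p : ↥α, ∀ q : ↥β, 0 ≤ (-(C p q)) * (u q + M) := by
    intro p q
    have h1 := hneg p q
    have h2 := hMle q q.2
    have : C p q = ((subm A α α)⁻¹ * subm A α β) p q := rfl
    nlinarith
  have hα : ∀ p : ↥α, -M ≤ u p := by
    intro p
    have h1 := key p
    have h2 := hBF p
    have h3 : 0 ≤ ∑ q : ↥β, (-(C p q)) * (u q + M) :=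
      Finset.sum_nonneg fun q _ => hterm p q
    linarith
  constructor
  · intro k
    have hk : k ∈ α ∪ β := by rw [hunion]; exact Finset.mem_univ k
    rcases Finset.mem_union.mp hk with h | h
    · exact hα ⟨k, h⟩
    · exact hMle k h
  · rintro ⟨i, hi, hui⟩
    have hk := key ⟨i, hi⟩
    have he : (∑ r : ↥α, B ⟨i, hi⟩ r * F r)
        + ∑ q : ↥β, (-(C ⟨i, hi⟩ q)) * (u q + M) = 0 := by
      have : u (⟨i, hi⟩ : ↥α).val = -M := hui
      linarith [hk, this]
    have h3 : 0 ≤ ∑ q : ↥β, (-(C ⟨i, hi⟩ q)) * (u q + M) :=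
      Finset.sum_nonneg fun q _ => hterm ⟨i, hi⟩ q
    have hBF0 : ∑ r : ↥α, B ⟨i, hi⟩ r * F r = 0 := by linarith [hBF ⟨i, hi⟩]
    have hsum0 : ∑ q : ↥β, (-(C ⟨i, hi⟩ q)) * (u q + M) = 0 := by
      linarith [hBF ⟨i, hi⟩]
    have hF0 : ∀ r : ↥α, F r = 0 := by
      intro r
      have := (Finset.sum_eq_zero_iff_of_nonneg
        (fun r _ => mul_nonneg (hpos ⟨i, hi⟩ r).le (hF r))).mp hBF0 r
        (Finset.mem_univ r)
      rcases mul_eq_zero.mp this with h | h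
      · exact absurd h (ne_of_gt (hpos ⟨i, hi⟩ r))
      · exact h
    have huβ : ∀ q : ↥β, u q = -M := by
      intro q
      have := (Finset.sum_eq_zero_iff_of_nonneg
        (fun q _ => hterm ⟨i, hi⟩ q)).mp hsum0 q (Finset.mem_univ q)
      rcases mul_eq_zero.mp this with h | h
      · exact absurd h (by have := hneg ⟨i, hi⟩ q; intro hc; nlinarith)
      · linarith
    have hall : ∀ k, u k = -M := by
      intro k
      have hk' : k ∈ α ∪ β := by rw [hunion]; exact Finset.mem_univ k
      rcases Finset.mem_union.mp hk' with h | h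
      · have hkey := key ⟨k, h⟩
        have e1 : ∑ r : ↥α, B ⟨k, h⟩ r * F r = 0 :=
          Finset.sum_eq_zero fun r _ => by rw [hF0 r, mul_zero]
        have e2 : ∑ q : ↥β, (-(C ⟨k, h⟩ q)) * (u q + M) = 0 :=
          Finset.sum_eq_zero fun q _ => by rw [huβ q]; ring
        have : u (⟨k, h⟩ : ↥α).val + M = 0 := by rw [hkey, e1, e2]; ring
        linarith
      · exact huβ ⟨k, h⟩
    intro k l
    rw [hall k, hall l]
end

section
/- Let N ≥ 2, let {α, β} be a partition of {1,…,N} into nonempty sets, let ~ be an adjacency relation on {1,…,N}, and let A be a real N×N matrix with all row sums zero such that A_{ij} = 0 whenever i ≠ j and i is not ~-adjacent to j. Assume: (a) α is ~-connected; (b) every j ∈ β is ~-adjacent to some i ∈ α; (c) A_{ij} < 0 for every pair i ≠ j with i ~ j such that i ∈ α or j ∈ α. Then for every u ∈ ℝ^N with (Au)_i ≥ 0 for all i ∈ α: min_{1≤k≤N} u_k ≥ min_{j∈β} u_j; and if the minimum of u over all of {1,…,N} is attained at some index in α, then u is constant. -/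
open Matrix Finset

lemma sDMP_key {N : ℕ} (α : Finset (Fin N)) (adj : Fin N → Fin N → Prop)
    (hirr : Irreflexive adj)
    (A : Matrix (Fin N) (Fin N) ℝ)
    (hrow : ∀ i, ∑ j, A i j = 0)
    (hz : ∀ i j, i ≠ j → ¬ adj i j → A i j = 0)
    (hneg : ∀ i j, i ≠ j → adj i j → (i ∈ α ∨ j ∈ α) → A i j < 0)
    (u : Fin N → ℝ) (i : Fin N) (hi : i ∈ α) (hmin : ∀ k, u i ≤ u k)
    (hAu : 0 ≤ A.mulVec u i) : ∀ j, adj i j → u j = u i := by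
  have hsum : ∑ j, A i j * (u j - u i) = A.mulVec u i - (∑ j, A i j) * u i := by
    simp [Matrix.mulVec, dotProduct, mul_sub, Finset.sum_sub_distrib, Finset.sum_mul]
  rw [hrow, zero_mul, sub_zero] at hsum
  have hnonpos : ∀ j ∈ Finset.univ, A i j * (u j - u i) ≤ 0 := by
    intro j _
    by_cases hij : i = j
    · simp [hij]
    by_cases hadj : adj i j
    · have h1 := hneg i j hij hadj (Or.inl hi)
      have h2 := hmin j
      nlinarith
    · simp [hz i j hij hadj]
  have hsum0 : ∑ j, A i j * (u j - u i) = 0 :=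
    le_antisymm (Finset.sum_nonpos hnonpos) (hsum ▸ hAu)
  have hall := (Finset.sum_eq_zero_iff_of_nonpos hnonpos).mp hsum0
  intro j hadj
  have hij : i ≠ j := by rintro rfl; exact hirr i hadj
  have hterm := hall j (Finset.mem_univ j)
  have hAneg := hneg i j hij hadj (Or.inl hi)
  have hge := hmin j
  nlinarith [hterm]

/-- Classical strong discrete maximum principle sDMP-A under the strict angle
condition: all off-diagonal entries of the stiffness matrix corresponding to
edges touching an interior vertex are strictly negative. -/
theorem sDMP_A_classical {N : ℕ} (hN : 2 ≤ N)
    (α β : Finset (Fin N)) (hdisj : Disjoint α β) (hunion : α ∪ β = Finset.univ)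
    (hαne : α.Nonempty) (hβne : β.Nonempty)
    (adj : Fin N → Fin N → Prop) (hsym : Symmetric adj) (hirr : Irreflexive adj)
    (A : Matrix (Fin N) (Fin N) ℝ)
    (hrow : ∀ i, ∑ j, A i j = 0)
    (hz : ∀ i j, i ≠ j → ¬ adj i j → A i j = 0)
    (hconn : AdjConnected adj α)
    (hbd : ∀ j ∈ β, ∃ i ∈ α, adj i j)
    (hneg : ∀ i j, i ≠ j → adj i j → (i ∈ α ∨ j ∈ α) → A i j < 0) :
    ∀ u : Fin N → ℝ, (∀ i ∈ α, 0 ≤ A.mulVec u i) →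
      (∀ k, β.inf' hβne u ≤ u k) ∧
      ((∃ i ∈ α, ∀ k, u i ≤ u k) → ∀ k l, u k = u l) := by
  intro u hu
  -- part 2
  have part2 : (∃ i ∈ α, ∀ k, u i ≤ u k) → ∀ k l, u k = u l := by
    rintro ⟨i0, hi0, hmin0⟩
    have hα : ∀ j ∈ α, u j = u i0 := by
      intro j hj
      have hpath := hconn i0 hi0 j hj
      induction hpath with
      | refl => rfl
      | tail hab step ih =>
        rename_i b c
        obtain ⟨hbα, hcα, hadj⟩ := step
        have hub : u b = u i0 := ih hbα
        have hminb : ∀ k, u b ≤ u k := by intro k; rw [hub]; exact hmin0 k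
        have := sDMP_key α adj hirr A hrow hz hneg u b hbα hminb (hu b hbα) c hadj
        rw [this, hub]
    have hall : ∀ k, u k = u i0 := by
      intro k
      have hk : k ∈ α ∪ β := hunion ▸ Finset.mem_univ k
      rcases Finset.mem_union.mp hk with h | h
      · exact hα k h
      · obtain ⟨i, hiα, hadj⟩ := hbd k h
        have hui : u i = u i0 := hα i hiα
        have hmini : ∀ m, u i ≤ u m := by intro m; rw [hui]; exact hmin0 m
        have := sDMP_key α adj hirr A hrow hz hneg u i hiα hmini (hu i hiα) k hadj
        rw [this, hui]
    intro k l; rw [hall k, hall l]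
  refine ⟨?_, part2⟩
  -- part 1
  obtain ⟨k0, _, hk0min⟩ := Finset.exists_min_image Finset.univ u ⟨⟨0, by omega⟩, Finset.mem_univ _⟩
  have hk0min' : ∀ k, u k0 ≤ u k := fun k => hk0min k (Finset.mem_univ k)
  intro k
  have hk0 : k0 ∈ α ∪ β := hunion ▸ Finset.mem_univ k0
  rcases Finset.mem_union.mp hk0 with h | h
  · have hconst := part2 ⟨k0, h, hk0min'⟩
    obtain ⟨j, hj⟩ := hβne
    exact le_trans (Finset.inf'_le u hj) (le_of_eq (hconst j k))
  · exact le_trans (Finset.inf'_le u h) (hk0min' k)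
end

section
/- Define the real 3×3 matrices A = [[4,−1,−1],[−1,4,0],[−1,0,4]], B = [[1/2,0,0],[1/2,0,0],[−1/2,0,0]], C₀ = [[3/2,−1,−1],[−1,5/4,1/4],[−1,1/4,5/4]], R₀ = [[1/2,3/4,1/4],[1/2,1/4,3/4],[0,0,0]]. Let a > 0, K > 0, and for each α ∈ (0,a) let C(α) and R(α) be real 3×3 matrices with C(α) symmetric, such that every entry of α·C(α) − C₀ and of R(α) − R₀ has absolute value at most K·α. Define the 6×6 matrices S̃(α) = [[A, B],[Bᵀ, C(α)]], E(α) = [[I, −R(α)],[0, I]] (I the 3×3 identity), and S(α) = E(α) S̃(α) E(α)ᵀ. Then there exists α₁ ∈ (0,a] such that S(α) is invertible for all α ∈ (0,α₁), and S(α)^{-1} converges entrywise, as α → 0⁺, to the 6×6 matrix T₀ = [[A^{-1}, A^{-1}R₀],[R₀ᵀA^{-1}, R₀ᵀA^{-1}R₀]]; moreover T₀ is entrywise positive and singular. -/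
/-!
The unipotent congruence `E(α)` and the LDU factorisation of `S̃(α)` express `S(α)⁻¹` as a
polynomial in `R(α)` and `Δ(α)⁻¹`, where `Δ(α) = C(α) - Bᵀ A⁻¹ B` is the Schur complement
of `A`. Since `α • Δ(α) → C₀` and `det C₀ = 1/4 ≠ 0`, `Δ(α)` is invertible for small `α` and
`Δ(α)⁻¹ = α • (α • Δ(α))⁻¹ → 0`. Hence `S(α)⁻¹` tends to the value of that polynomial at
`(R₀, 0)`, which is `T₀ = [[1, 0], [R₀ᵀ, 1]] * diag(A⁻¹, 0) * [[1, R₀], [0, 1]]`; this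
factorisation also shows that `T₀` is singular.
-/

open Matrix Filter

/-- The block `A` of the stiffness matrix. -/
noncomputable def Amat : Matrix (Fin 3) (Fin 3) ℝ :=
  !![4, -1, -1; -1, 4, 0; -1, 0, 4]

/-- The block `B` of the stiffness matrix. -/
noncomputable def Bmat : Matrix (Fin 3) (Fin 3) ℝ :=
  !![1/2, 0, 0; 1/2, 0, 0; -1/2, 0, 0]

/-- The leading term `C₀` of `α·C(α)`. -/
noncomputable def C0mat : Matrix (Fin 3) (Fin 3) ℝ :=
  !![3/2, -1, -1; -1, 5/4, 1/4; -1, 1/4, 5/4]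

/-- The limit `R₀` of the change-of-basis block `R(α)`. -/
noncomputable def R0mat : Matrix (Fin 3) (Fin 3) ℝ :=
  !![1/2, 3/4, 1/4; 1/2, 1/4, 3/4; 0, 0, 0]

/-- The stiffness matrix in the hierarchical basis. -/
noncomputable def Stilde (C : ℝ → Matrix (Fin 3) (Fin 3) ℝ) (t : ℝ) :
    Matrix (Fin 3 ⊕ Fin 3) (Fin 3 ⊕ Fin 3) ℝ :=
  Matrix.fromBlocks Amat Bmat Bmatᵀ (C t)

/-- The change-of-basis matrix. -/
noncomputable def Emat (R : ℝ → Matrix (Fin 3) (Fin 3) ℝ) (t : ℝ) :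
    Matrix (Fin 3 ⊕ Fin 3) (Fin 3 ⊕ Fin 3) ℝ :=
  Matrix.fromBlocks 1 (-(R t)) 0 1

/-- The stiffness matrix in the nodal basis. -/
noncomputable def Smat (C R : ℝ → Matrix (Fin 3) (Fin 3) ℝ) (t : ℝ) :
    Matrix (Fin 3 ⊕ Fin 3) (Fin 3 ⊕ Fin 3) ℝ :=
  Emat R t * Stilde C t * (Emat R t)ᵀ

/-- The limit matrix `T₀`. -/
noncomputable def T0mat : Matrix (Fin 3 ⊕ Fin 3) (Fin 3 ⊕ Fin 3) ℝ :=
  Matrix.fromBlocks Amat⁻¹ (Amat⁻¹ * R0mat) (R0matᵀ * Amat⁻¹) (R0matᵀ * Amat⁻¹ * R0mat)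

open Topology

namespace Matrix

variable {m n α : Type*} [Fintype m] [DecidableEq m] [Fintype n]

section Algebra

variable [CommRing α]

/-- The inverse of `fromBlocks A B C D` in terms of the inverse `H` of the Schur complement
`D - C * A⁻¹ * B`. -/
noncomputable def schurBlockInv (A : Matrix m m α) (B : Matrix m n α) (C : Matrix n m α)
    (H : Matrix n n α) : Matrix (m ⊕ n) (m ⊕ n) α :=
  fromBlocks (A⁻¹ + A⁻¹ * B * H * C * A⁻¹) (-(A⁻¹ * B * H)) (-(H * C * A⁻¹)) H

@[simp]
theorem schurBlockInv_zero (A : Matrix m m α) (B : Matrix m n α) (C : Matrix n m α) :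
    schurBlockInv A B C 0 = fromBlocks A⁻¹ 0 0 0 := by
  simp [schurBlockInv]

variable [DecidableEq n]

theorem inv_fromBlocks_eq_schurBlockInv {A : Matrix m m α} {B : Matrix m n α}
    {C : Matrix n m α} {D : Matrix n n α} (hA : IsUnit A.det)
    (hS : IsUnit (D - C * A⁻¹ * B).det) :
    (fromBlocks A B C D)⁻¹ = schurBlockInv A B C (D - C * A⁻¹ * B)⁻¹ := by
  let := A.invertibleOfIsUnitDet hA
  let := (D - C * ⅟A * B).invertibleOfIsUnitDet (by rwa [invOf_eq_nonsing_inv])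
  let := fromBlocks₁₁Invertible A B C D
  rw [← invOf_eq_nonsing_inv, invOf_fromBlocks₁₁_eq]
  simp only [schurBlockInv, invOf_eq_nonsing_inv, Matrix.mul_assoc]

theorem isUnit_det_fromBlocks {A : Matrix m m α} {B : Matrix m n α}
    {C : Matrix n m α} {D : Matrix n n α} (hA : IsUnit A.det)
    (hS : IsUnit (D - C * A⁻¹ * B).det) : IsUnit (fromBlocks A B C D).det := by
  let := A.invertibleOfIsUnitDet hA
  rw [det_fromBlocks₁₁, invOf_eq_nonsing_inv]
  exact hA.mul hS

theorem inv_fromBlocks_one_neg_zero_one (R : Matrix m n α) :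
    (fromBlocks 1 (-R) 0 1 : Matrix (m ⊕ n) (m ⊕ n) α)⁻¹ = fromBlocks 1 R 0 1 :=
  inv_eq_right_inv <| by simp [fromBlocks_multiply, ← fromBlocks_one]

theorem inv_unipotent_congr (R : Matrix m n α) (X : Matrix (m ⊕ n) (m ⊕ n) α) :
    (fromBlocks 1 (-R) 0 1 * X * (fromBlocks 1 (-R) 0 1)ᵀ)⁻¹ =
      fromBlocks 1 0 Rᵀ 1 * X⁻¹ * fromBlocks 1 R 0 1 := by
  rw [mul_inv_rev, mul_inv_rev, ← transpose_nonsing_inv, inv_fromBlocks_one_neg_zero_one,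
    fromBlocks_transpose, Matrix.mul_assoc]
  simp

theorem det_unipotent_congr (R : Matrix m n α) (X : Matrix (m ⊕ n) (m ⊕ n) α) :
    (fromBlocks 1 (-R) 0 1 * X * (fromBlocks 1 (-R) 0 1)ᵀ).det = X.det := by
  simp [det_transpose]

end Algebra

section Limits

variable {𝕜 : Type*} [NormedField 𝕜] {ι : Type*} {l : Filter ι} {k : ι → 𝕜}
  {X : ι → Matrix m m 𝕜} {X₀ : Matrix m m 𝕜}

theorem eventually_isUnit_det_of_smul_tendsto (h : Tendsto (fun i => k i • X i) l (𝓝 X₀))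
    (hX₀ : IsUnit X₀.det) : ∀ᶠ i in l, IsUnit (X i).det := by
  have hdet := ((continuous_id.matrix_det).tendsto X₀).comp h
  filter_upwards [hdet.eventually_ne hX₀.ne_zero] with i hi
  rw [Function.comp_apply, id, det_smul] at hi
  exact (right_ne_zero_of_mul hi).isUnit

theorem tendsto_inv_zero_of_smul_tendsto (hk : Tendsto k l (𝓝[≠] 0))
    (h : Tendsto (fun i => k i • X i) l (𝓝 X₀)) (hX₀ : IsUnit X₀.det) :
    Tendsto (fun i => (X i)⁻¹) l (𝓝 0) := by
  have hinv : ContinuousAt Inv.inv X₀ := continuousAt_matrix_inv X₀ <| by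
    rw [Ring.inverse_eq_inv']
    exact continuousAt_inv₀ hX₀.ne_zero
  have hlim := (tendsto_nhdsWithin_iff.mp hk).1.smul (hinv.tendsto.comp h)
  rw [zero_smul] at hlim
  refine hlim.congr' ?_
  filter_upwards [eventually_isUnit_det_of_smul_tendsto h hX₀,
    tendsto_nhdsWithin_iff.mp hk |>.2] with i hX hk0
  let := invertibleOfNonzero (hk0 : k i ≠ 0)
  dsimp only [Function.comp_apply]
  rw [inv_smul (X i) (k i) hX, smul_smul, mul_invOf_self, one_smul]

end Limits

end Matrix

theorem Matrix.tendsto_nhdsGT_of_abs_sub_le {m n : Type*} {f : ℝ → Matrix m n ℝ}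
    {L : Matrix m n ℝ} {a K : ℝ} (ha : 0 < a)
    (h : ∀ t, 0 < t → t < a → ∀ i j, |f t i j - L i j| ≤ K * t) :
    Tendsto f (𝓝[>] 0) (𝓝 L) := by
  refine tendsto_pi_nhds.mpr fun i => tendsto_pi_nhds.mpr fun j => ?_
  have hK : Tendsto (fun t : ℝ => K * t) (𝓝[>] 0) (𝓝 0) := by
    simpa using ((continuous_const_mul K).tendsto 0).mono_left nhdsWithin_le_nhds
  refine tendsto_sub_nhds_zero_iff.mp (squeeze_zero_norm' ?_ hK)
  filter_upwards [Ioo_mem_nhdsGT ha] with t ht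
  exact h t ht.1 ht.2 i j

theorem isUnit_det_Amat : IsUnit Amat.det := by
  norm_num [Amat, det_fin_three, cons_val_two]

theorem isUnit_det_C0mat : IsUnit C0mat.det := by
  norm_num [C0mat, det_fin_three, cons_val_two]

theorem Amat_inv :
    Amat⁻¹ = !![2/7, 1/14, 1/14; 1/14, 15/56, 1/56; 1/14, 1/56, 15/56] := by
  refine inv_eq_right_inv ?_
  ext i j
  fin_cases i <;> fin_cases j <;>
    norm_num [Amat, mul_apply, Fin.sum_univ_three, one_apply, cons_val_two]

theorem T0mat_eq_fromBlocks_mul :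
    T0mat = fromBlocks 1 0 R0matᵀ 1 * fromBlocks Amat⁻¹ 0 0 0 * fromBlocks 1 R0mat 0 1 := by
  simp [T0mat, fromBlocks_multiply, Matrix.mul_assoc]

theorem T0mat_det : T0mat.det = 0 := by
  simp [T0mat_eq_fromBlocks_mul, det_fromBlocks_zero₂₁]

theorem T0mat_pos (i j : Fin 3 ⊕ Fin 3) : 0 < T0mat i j := by
  rcases i with i | i <;> rcases j with j | j <;> fin_cases i <;> fin_cases j <;>
    norm_num [T0mat, Amat_inv, R0mat, mul_apply, Fin.sum_univ_three, cons_val_two]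

theorem Smat_inv {C R : ℝ → Matrix (Fin 3) (Fin 3) ℝ} {t : ℝ}
    (h : IsUnit (C t - Bmatᵀ * Amat⁻¹ * Bmat).det) :
    (Smat C R t)⁻¹ = fromBlocks 1 0 (R t)ᵀ 1 *
      schurBlockInv Amat Bmat Bmatᵀ (C t - Bmatᵀ * Amat⁻¹ * Bmat)⁻¹ *
        fromBlocks 1 (R t) 0 1 := by
  rw [Smat, Emat, Stilde, inv_unipotent_congr,
    inv_fromBlocks_eq_schurBlockInv isUnit_det_Amat h]

theorem isUnit_Smat {C R : ℝ → Matrix (Fin 3) (Fin 3) ℝ} {t : ℝ}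
    (h : IsUnit (C t - Bmatᵀ * Amat⁻¹ * Bmat).det) : IsUnit (Smat C R t) := by
  rw [isUnit_iff_isUnit_det, Smat, Emat, Stilde, det_unipotent_congr]
  exact isUnit_det_fromBlocks isUnit_det_Amat h

theorem inverse_stiffness_tendsto_T0_general
    (a K : ℝ) (ha : 0 < a)
    (C R : ℝ → Matrix (Fin 3) (Fin 3) ℝ)
    (hCapprox : ∀ t, 0 < t → t < a → ∀ i j, |t * C t i j - C0mat i j| ≤ K * t)
    (hRapprox : ∀ t, 0 < t → t < a → ∀ i j, |R t i j - R0mat i j| ≤ K * t) :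
    (∃ α₁, 0 < α₁ ∧ α₁ ≤ a ∧
      (∀ t, 0 < t → t < α₁ → IsUnit (Smat C R t)) ∧
      (∀ i j, Tendsto (fun t => (Smat C R t)⁻¹ i j)
        (nhdsWithin 0 (Set.Ioi 0)) (nhds (T0mat i j)))) ∧
    (∀ i j, 0 < T0mat i j) ∧ T0mat.det = 0 := by
  set Δ : ℝ → Matrix (Fin 3) (Fin 3) ℝ := fun t => C t - Bmatᵀ * Amat⁻¹ * Bmat
  have hR : Tendsto R (𝓝[>] 0) (𝓝 R0mat) := tendsto_nhdsGT_of_abs_sub_le ha hRapprox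
  have hΔ : Tendsto (fun t => t • Δ t) (𝓝[>] 0) (𝓝 C0mat) := by
    have hC : Tendsto (fun t => t • C t) (𝓝[>] 0) (𝓝 C0mat) :=
      tendsto_nhdsGT_of_abs_sub_le ha (by simpa using hCapprox)
    have hM : Tendsto (fun t : ℝ => t • (Bmatᵀ * Amat⁻¹ * Bmat)) (𝓝[>] 0) (𝓝 0) := by
      exact ((continuous_id.smul continuous_const).tendsto' 0 0 (zero_smul ℝ _)).mono_left
        nhdsWithin_le_nhds
    simpa [Δ, smul_sub] using hC.sub hM
  have hΔunit := eventually_isUnit_det_of_smul_tendsto hΔ isUnit_det_C0mat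
  have hΔinv :=
    tendsto_inv_zero_of_smul_tendsto (tendsto_id'.mpr (nhdsGT_le_nhdsNE 0)) hΔ isUnit_det_C0mat
  obtain ⟨u, hu, hsub⟩ := mem_nhdsGT_iff_exists_Ioo_subset.mp hΔunit
  refine ⟨⟨min u a, lt_min hu ha, min_le_right u a, fun t ht0 ht =>
    isUnit_Smat (hsub ⟨ht0, ht.trans_le (min_le_left u a)⟩), fun i j => ?_⟩,
    T0mat_pos, T0mat_det⟩
  have hcont : Continuous fun p : Matrix (Fin 3) (Fin 3) ℝ × Matrix (Fin 3) (Fin 3) ℝ =>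
      fromBlocks 1 0 p.1ᵀ 1 * schurBlockInv Amat Bmat Bmatᵀ p.2 * fromBlocks 1 p.1 0 1 := by
    unfold schurBlockInv
    fun_prop
  have hlim : Tendsto (fun t => (Smat C R t)⁻¹) (𝓝[>] 0) (𝓝 T0mat) := by
    rw [T0mat_eq_fromBlocks_mul, ← schurBlockInv_zero Amat Bmat Bmatᵀ]
    exact ((hcont.tendsto _).comp (hR.prodMk_nhds hΔinv)).congr'
      (hΔunit.mono fun t ht => (Smat_inv ht).symm)
  exact tendsto_pi_nhds.mp (tendsto_pi_nhds.mp hlim i) j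

/-- The inverse stiffness matrix of the patch containing a nearly degenerate
triangulation converges entrywise, as the small angle tends to `0⁺`, to the
singular entrywise positive matrix `T₀`. -/
theorem inverse_stiffness_tendsto_T0
    (a K : ℝ) (ha : 0 < a) (hK : 0 < K)
    (C R : ℝ → Matrix (Fin 3) (Fin 3) ℝ)
    (hCsymm : ∀ t, 0 < t → t < a → (C t).IsSymm)
    (hCapprox : ∀ t, 0 < t → t < a → ∀ i j, |t * C t i j - C0mat i j| ≤ K * t)
    (hRapprox : ∀ t, 0 < t → t < a → ∀ i j, |R t i j - R0mat i j| ≤ K * t) :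
    (∃ α₁, 0 < α₁ ∧ α₁ ≤ a ∧
      (∀ t, 0 < t → t < α₁ → IsUnit (Smat C R t)) ∧
      (∀ i j, Tendsto (fun t => (Smat C R t)⁻¹ i j)
        (nhdsWithin 0 (Set.Ioi 0)) (nhds (T0mat i j)))) ∧
    (∀ i j, 0 < T0mat i j) ∧ T0mat.det = 0 :=
  inverse_stiffness_tendsto_T0_general a K ha C R hCapprox hRapprox
end

section
/- Let N ≥ 2 and let a₁,…,a_N be real numbers with a_i < 0 for 2 ≤ i ≤ N and a₁ + a₂ + ⋯ + a_N = 0 (so a₁ > 0). Let m₁,…,m_N > 0 and L > 0 satisfy L·m_i < −a_i for every 2 ≤ i ≤ N. For each 1 ≤ i ≤ N let c_i : ℝ → ℝ be nondecreasing with c_i(0) = 0 and |c_i(s) − c_i(t)| ≤ L·|s − t| for all s, t ∈ ℝ. Suppose U₁,…,U_N ∈ ℝ satisfy Σ_{i=1}^N a_i U_i + Σ_{i=1}^N m_i c_i(U_i) ≥ 0. Then U₁ ≥ −max_{2≤i≤N} U_i⁻; and if U₁ = −max_{2≤i≤N} U_i⁻, then U₁ = U₂ = ⋯ = U_N and c_i(U₁)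 = 0 for all 1 ≤ i ≤ N. -/
open Finset

/-- Local ("star") form of the strong discrete maximum principle sDMP-B for a
P1 finite element discretization of a monotone semilinear elliptic equation:
index `1` is the interior vertex (scalars `a₁, m₁, U₁, c₁`) and the indices
`2, …, N` are its neighbors (here indexed by `Fin n` with `n = N - 1 ≥ 1`). -/
theorem semilinear_star_sDMP_B {n : ℕ} (hn : 1 ≤ n)
    (a₁ : ℝ) (a : Fin n → ℝ) (ha : ∀ i, a i < 0)
    (hsum : a₁ + ∑ i, a i = 0)
    (m₁ : ℝ) (m : Fin n → ℝ) (hm₁ : 0 < m₁) (hm : ∀ i, 0 < m i)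
    (L : ℝ) (hL : 0 < L)
    (hLm : ∀ i, L * m i < -(a i))
    (c₁ : ℝ → ℝ) (c : Fin n → ℝ → ℝ)
    (hc₁mono : Monotone c₁) (hcmono : ∀ i, Monotone (c i))
    (hc₁zero : c₁ 0 = 0) (hczero : ∀ i, c i 0 = 0)
    (hc₁lip : ∀ s t : ℝ, |c₁ s - c₁ t| ≤ L * |s - t|)
    (hclip : ∀ i, ∀ s t : ℝ, |c i s - c i t| ≤ L * |s - t|)
    (U₁ : ℝ) (U : Fin n → ℝ)
    (hineq : 0 ≤ a₁ * U₁ + ∑ i, a i * U i + m₁ * c₁ U₁ + ∑ i, m i * c i (U i)) :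
    -(Finset.univ.sup' ⟨⟨0, hn⟩, Finset.mem_univ _⟩ fun i => max (-(U i)) 0) ≤ U₁ ∧
    (U₁ = -(Finset.univ.sup' ⟨⟨0, hn⟩, Finset.mem_univ _⟩ fun i => max (-(U i)) 0) →
      (∀ i, U i = U₁) ∧ c₁ U₁ = 0 ∧ ∀ i, c i U₁ = 0) := by
  set M : ℝ := Finset.univ.sup' ⟨⟨0, hn⟩, Finset.mem_univ _⟩ fun i => max (-(U i)) 0 with hMdef
  have hMi : ∀ i, max (-(U i)) 0 ≤ M := fun i =>
    Finset.le_sup' (fun j => max (-(U j)) 0) (Finset.mem_univ i)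
  have hM0 : 0 ≤ M := le_trans (le_max_right _ _) (hMi ⟨0, hn⟩)
  have hqM : ∀ i, -(U i) ≤ M := fun i => le_trans (le_max_left _ _) (hMi i)
  -- rewrite the main inequality
  have ha₁ : a₁ = ∑ i, -(a i) := by
    rw [Finset.sum_neg_distrib]; linarith
  have hrw : a₁ * U₁ + ∑ i, a i * U i = ∑ i, a i * (U i - U₁) := by
    rw [ha₁]
    rw [Finset.sum_mul, ← Finset.sum_add_distrib]
    congr 1; ext i; ring
  have hineq' : 0 ≤ (∑ i, (a i * (U i - U₁) + m i * c i (U i))) + m₁ * c₁ U₁ := by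
    rw [Finset.sum_add_distrib]
    calc (0:ℝ) ≤ a₁ * U₁ + ∑ i, a i * U i + m₁ * c₁ U₁ + ∑ i, m i * c i (U i) := hineq
    _ = _ := by rw [hrw]; ring
  -- pointwise bounds on c
  have hcbound : ∀ i, c i (U i) ≤ L * max (U i) 0 := by
    intro i
    rcases le_total (U i) 0 with h | h
    · have : c i (U i) ≤ c i 0 := hcmono i h
      rw [hczero i] at this
      have : max (U i) 0 = 0 := max_eq_right h
      simp [this]
      linarith [hcmono i h, hczero i]
    · have h1 := hclip i (U i) 0
      rw [sub_zero, hczero i, sub_zero, abs_of_nonneg h] at h1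
      have := le_of_abs_le h1
      rw [max_eq_left h]
      exact this
  have hmax : ∀ i, max (U i) 0 - max (-(U i)) 0 = U i := by
    intro i
    rcases le_total (U i) 0 with h | h
    · rw [max_eq_right h, max_eq_left (by linarith)]; ring
    · rw [max_eq_left h, max_eq_right (by linarith)]; ring
  -- key per-term bound
  have hT : ∀ i, a i * (U i - U₁) + m i * c i (U i) ≤
      (a i + L * m i) * max (U i) 0 + (-(a i)) * (U₁ + max (-(U i)) 0) := by
    intro i
    have h1 := hcbound i
    have h2 := hmax i
    have h4 : a i * max (U i) 0 - a i * max (-(U i)) 0 = a i * U i := by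
      rw [← mul_sub, h2]
    have h5 : m i * c i (U i) ≤ m i * (L * max (U i) 0) :=
      mul_le_mul_of_nonneg_left h1 (hm i).le
    nlinarith [h4, h5]
  have hBneg : ∀ i, (a i + L * m i) * max (U i) 0 ≤ 0 := by
    intro i
    apply mul_nonpos_of_nonpos_of_nonneg
    · linarith [hLm i]
    · exact le_max_right _ _
  -- Part 1
  have part1 : -M ≤ U₁ := by
    by_contra hlt
    push_neg at hlt
    have hU₁neg : U₁ < 0 := by linarith
    have hc₁neg : m₁ * c₁ U₁ ≤ 0 := by
      have : c₁ U₁ ≤ c₁ 0 := hc₁mono hU₁neg.le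
      rw [hc₁zero] at this
      exact mul_nonpos_of_nonneg_of_nonpos hm₁.le this
    have hTb : ∀ i ∈ Finset.univ, a i * (U i - U₁) + m i * c i (U i) ≤ (-(a i)) * (U₁ + M) := by
      intro i _
      have h1 := hT i
      have h2 := hBneg i
      have h3 : (-(a i)) * (U₁ + max (-(U i)) 0) ≤ (-(a i)) * (U₁ + M) := by
        apply mul_le_mul_of_nonneg_left _ (by linarith [ha i])
        linarith [hMi i]
      linarith
    have hsumb : (∑ i, (a i * (U i - U₁) + m i * c i (U i))) ≤ ∑ i, (-(a i)) * (U₁ + M) :=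
      Finset.sum_le_sum hTb
    have : ∑ i, (-(a i)) * (U₁ + M) = a₁ * (U₁ + M) := by
      rw [ha₁, Finset.sum_mul]
    have ha₁pos : 0 < a₁ := by
      rw [ha₁]
      apply Finset.sum_pos (fun i _ => by linarith [ha i]) ⟨⟨0, hn⟩, Finset.mem_univ _⟩
    nlinarith
  refine ⟨part1, fun heq => ?_⟩
  -- Part 2: equality case
  have hU₁np : U₁ ≤ 0 := by rw [heq]; linarith
  have hc₁np : m₁ * c₁ U₁ ≤ 0 := by
    have : c₁ U₁ ≤ c₁ 0 := hc₁mono hU₁np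
    rw [hc₁zero] at this
    exact mul_nonpos_of_nonneg_of_nonpos hm₁.le this
  have hTnp : ∀ i ∈ Finset.univ, a i * (U i - U₁) + m i * c i (U i) ≤ 0 := by
    intro i _
    have h1 := hT i
    have h2 := hBneg i
    have h3 : (-(a i)) * (U₁ + max (-(U i)) 0) ≤ 0 := by
      apply mul_nonpos_of_nonneg_of_nonpos (by linarith [ha i])
      have := hMi i
      rw [heq]
      linarith [le_trans (le_max_left (-(U i)) 0) this]
    linarith
  have hsumnp : (∑ i, (a i * (U i - U₁) + m i * c i (U i))) ≤ 0 :=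
    Finset.sum_nonpos hTnp
  have hc₁eq : m₁ * c₁ U₁ = 0 := le_antisymm hc₁np (by linarith)
  have hsumeq : (∑ i, (a i * (U i - U₁) + m i * c i (U i))) = 0 :=
    le_antisymm hsumnp (by linarith)
  have hTeq : ∀ i, a i * (U i - U₁) + m i * c i (U i) = 0 := by
    intro i
    have := (Finset.sum_eq_zero_iff_of_nonpos hTnp).mp hsumeq i (Finset.mem_univ i)
    exact this
  have hUeq : ∀ i, U i = U₁ := by
    intro i
    have h1 := hT i
    rw [hTeq i] at h1
    have h2 := hBneg i
    have h3 : (-(a i)) * (U₁ + max (-(U i)) 0) ≤ 0 := by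
      apply mul_nonpos_of_nonneg_of_nonpos (by linarith [ha i])
      rw [heq]; linarith [hMi i]
    -- both summands nonpositive with sum ≥ 0, so each is zero
    have hp : max (U i) 0 = 0 := by
      have hcoef : a i + L * m i < 0 := by linarith [hLm i]
      nlinarith [le_max_right (U i) 0]
    have hq : U₁ + max (-(U i)) 0 = 0 := by
      have : 0 ≤ (-(a i)) * (U₁ + max (-(U i)) 0) := by nlinarith
      have hai : 0 < -(a i) := by linarith [ha i]
      nlinarith
    have := hmax i
    rw [hp] at this
    linarith
  have hceq : ∀ i, c i U₁ = 0 := by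
    intro i
    have h1 := hTeq i
    rw [hUeq i] at h1
    simp at h1
    rcases h1 with h | h
    · exact absurd h (ne_of_gt (hm i))
    · exact h
  have hc₁z : c₁ U₁ = 0 := by
    rcases mul_eq_zero.mp hc₁eq with h | h
    · exact absurd h (ne_of_gt hm₁)
    · exact h
  exact ⟨hUeq, hc₁z, hceq⟩
end

section
/- Let m, k ≥ 1, let A₀ be an invertible real m×m matrix with A₀^{-1} entrywise positive, let B be an entrywise nonpositive real m×k matrix, let M₀ be a real m×m matrix, and let M₁ be an entrywise nonnegative real m×k matrix each of whose columns contains at least one positive entry. Then there exists ε₀ > 0 such that for every ε with 0 < ε < ε₀: A₀ − εM₀ is invertible, (A₀ − εM₀)^{-1} is entrywise positive, and (A₀ − εM₀)^{-1}(B − εM₁) is entrywise negative. -/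
open Matrix Filter

/-- Matrix lemma underlying the perturbation step in the proof of the weak
discrete maximum principle wDMP-A: subtracting a small positive multiple of
mass-matrix blocks from the stiffness-matrix blocks produces the strict sign
conditions of the strong maximum principle. -/
theorem perturbed_sign_conditions
    {m k : ℕ} (hm : 1 ≤ m) (hk : 1 ≤ k)
    (A₀ : Matrix (Fin m) (Fin m) ℝ)
    (hA₀ : IsUnit A₀) (hA₀inv : ∀ i j, 0 < A₀⁻¹ i j)
    (B : Matrix (Fin m) (Fin k) ℝ) (hB : ∀ i j, B i j ≤ 0)
    (M₀ : Matrix (Fin m) (Fin m) ℝ)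
    (M₁ : Matrix (Fin m) (Fin k) ℝ)
    (hM₁ : ∀ i j, 0 ≤ M₁ i j)
    (hM₁col : ∀ j, ∃ i, 0 < M₁ i j) :
    ∃ ε₀ : ℝ, 0 < ε₀ ∧
      ∀ ε : ℝ, 0 < ε → ε < ε₀ →
        IsUnit (A₀ - ε • M₀) ∧
        (∀ i j, 0 < (A₀ - ε • M₀)⁻¹ i j) ∧
        (∀ i j, ((A₀ - ε • M₀)⁻¹ * (B - ε • M₁)) i j < 0) := by
  set F : ℝ → Matrix (Fin m) (Fin m) ℝ := fun ε => A₀ - ε • M₀ with hF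
  have hF0 : F 0 = A₀ := by simp [hF]
  have hFc : Continuous F := by
    apply continuous_pi; intro i; apply continuous_pi; intro j
    have : (fun ε => F ε i j) = fun ε => A₀ i j - ε * M₀ i j := by
      funext ε; simp [hF, Matrix.sub_apply]
    rw [this]
    exact continuous_const.sub (continuous_id.mul continuous_const)
  have hdet0 : (F 0).det ≠ 0 := by
    rw [hF0]
    exact (Matrix.isUnit_iff_isUnit_det A₀).mp hA₀ |>.ne_zero
  -- continuity of the inverse at 0
  have hinvc : ContinuousAt (fun ε => (F ε)⁻¹) 0 := by
    have h1 : ContinuousAt Ring.inverse (F 0).det := by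
      rw [Ring.inverse_eq_inv']
      exact continuousAt_inv₀ hdet0
    exact (continuousAt_matrix_inv (F 0) h1).comp hFc.continuousAt
  -- eventually det ≠ 0
  have hev1 : ∀ᶠ ε in nhds (0 : ℝ), (F ε).det ≠ 0 :=
    (hFc.matrix_det.continuousAt).eventually_ne hdet0
  -- eventually each inverse entry positive
  have hev2 : ∀ᶠ ε in nhds (0 : ℝ), ∀ i j, 0 < (F ε)⁻¹ i j := by
    rw [eventually_all]
    intro i
    rw [eventually_all]
    intro j
    have hc : ContinuousAt (fun ε => (F ε)⁻¹ i j) 0 := by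
      have : ContinuousAt ((fun M : Matrix (Fin m) (Fin m) ℝ => M i j) ∘ fun ε => (F ε)⁻¹) 0 :=
        (((continuous_apply j).comp (continuous_apply i)).continuousAt).comp hinvc
      exact this
    have hpos : 0 < (F 0)⁻¹ i j := by rw [hF0]; exact hA₀inv i j
    exact hc.eventually (eventually_gt_nhds hpos)
  have hev := hev1.and hev2
  rw [Metric.eventually_nhds_iff] at hev
  obtain ⟨ε₀, hε₀, hball⟩ := hev
  refine ⟨ε₀, hε₀, fun ε hε hεlt => ?_⟩
  have hdist : dist ε 0 < ε₀ := by
    rw [Real.dist_eq, sub_zero, abs_of_pos hε]; exact hεlt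
  obtain ⟨hdet, hinv⟩ := hball hdist
  have hunit : IsUnit (F ε) :=
    (Matrix.isUnit_iff_isUnit_det _).mpr (isUnit_iff_ne_zero.mpr hdet)
  refine ⟨hunit, hinv, fun i j => ?_⟩
  have hmul : ((F ε)⁻¹ * (B - ε • M₁)) i j
      = ∑ l, (F ε)⁻¹ i l * (B l j - ε * M₁ l j) := by
    simp [Matrix.mul_apply, Matrix.sub_apply]
  rw [hmul]
  have hsplit : ∀ l ∈ Finset.univ, (F ε)⁻¹ i l * (B l j - ε * M₁ l j)
      ≤ (F ε)⁻¹ i l * (- (ε * M₁ l j)) := by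
    intro l _
    apply mul_le_mul_of_nonneg_left _ (hinv i l).le
    have := hB l j
    linarith
  calc ∑ l, (F ε)⁻¹ i l * (B l j - ε * M₁ l j)
      ≤ ∑ l, (F ε)⁻¹ i l * (- (ε * M₁ l j)) := Finset.sum_le_sum hsplit
    _ = - ∑ l, (F ε)⁻¹ i l * (ε * M₁ l j) := by
        simp [mul_neg, Finset.sum_neg_distrib]
    _ < 0 := by
        apply neg_neg_of_pos
        obtain ⟨i₀, hi₀⟩ := hM₁col j
        exact Finset.sum_pos'
          (fun l _ => mul_nonneg (hinv i l).le (mul_nonneg hε.le (hM₁ l j)))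
          ⟨i₀, Finset.mem_univ i₀, mul_pos (hinv i i₀) (mul_pos hε hi₀)⟩
end

section
/- Let m, k ≥ 1, let A be an invertible real m×m matrix, let B be a real m×k matrix, let t₀ > 0, and for each t ∈ (0, t₀) let C(t) be a symmetric invertible real k×k matrix such that C(t)^{-1} converges entrywise to the zero matrix as t → 0⁺. Then there exists t₁ ∈ (0, t₀] such that for all t ∈ (0, t₁) the (m+k)×(m+k) block matrix S̃(t) = [[A, B],[Bᵀ, C(t)]] is invertible, and S̃(t)^{-1} converges entrywise, as t → 0⁺, to the block matrix [[A^{-1}, 0],[0, 0]]. -/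
open Matrix Filter Topology

/-! Writing `D` for the lower right block, `[[A, B], [C, D]] = [[A, B D⁻¹], [C, 1]] · diag(1, D)`.
As `D⁻¹ → 0` the first factor tends to the invertible lower-triangular matrix `[[A, 0], [C, 1]]`,
so the inverse `diag(1, D⁻¹) · [[A, B D⁻¹], [C, 1]]⁻¹` tends to
`diag(1, 0) · [[A⁻¹, 0], [-C A⁻¹, 1]] = [[A⁻¹, 0], [0, 0]]`. -/

variable {β m n α : Type*} [Fintype m] [Fintype n] [DecidableEq m] [DecidableEq n]

section Algebra

variable [CommRing α] {A : Matrix m m α} {B : Matrix m n α} {C : Matrix n m α}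
  {D : Matrix n n α}

theorem Matrix.fromBlocks_eq_mul_fromBlocks_one_zero_zero (hD : IsUnit D) :
    fromBlocks A B C D = fromBlocks A (B * D⁻¹) C 1 * fromBlocks 1 0 0 D := by
  rw [fromBlocks_multiply]
  simp [Matrix.mul_assoc, nonsing_inv_mul D ((isUnit_iff_isUnit_det D).mp hD)]

theorem Matrix.inv_fromBlocks_eq_fromBlocks_one_zero_zero_mul (hD : IsUnit D) :
    (fromBlocks A B C D)⁻¹ = fromBlocks 1 0 0 D⁻¹ * (fromBlocks A (B * D⁻¹) C 1)⁻¹ := by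
  rw [fromBlocks_eq_mul_fromBlocks_one_zero_zero hD, Matrix.mul_inv_rev,
    inv_fromBlocks_zero₁₂_of_isUnit_iff _ _ _ (iff_of_true isUnit_one hD)]
  simp

theorem Matrix.isUnit_fromBlocks_of_isUnit_mul_inv (hD : IsUnit D)
    (hE : IsUnit (fromBlocks A (B * D⁻¹) C 1)) : IsUnit (fromBlocks A B C D) := by
  rw [fromBlocks_eq_mul_fromBlocks_one_zero_zero hD]
  exact hE.mul (isUnit_fromBlocks_zero₁₂.mpr ⟨isUnit_one, hD⟩)

end Algebra

section Topology

variable [Field α] [TopologicalSpace α] [IsTopologicalRing α] {l : Filter β}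

theorem Filter.Tendsto.eventually_isUnit_matrix [T1Space α] {M : β → Matrix n n α}
    {M₀ : Matrix n n α} (h : Tendsto M l (𝓝 M₀)) (hM₀ : IsUnit M₀) :
    ∀ᶠ t in l, IsUnit (M t) := by
  have hdet := ((continuous_id.matrix_det.tendsto M₀).comp h).eventually_ne
    ((isUnit_iff_isUnit_det M₀).mp hM₀).ne_zero
  filter_upwards [hdet] with t ht
  exact (isUnit_iff_isUnit_det _).mpr (isUnit_iff_ne_zero.mpr ht)

theorem Filter.Tendsto.matrix_inv [ContinuousInv₀ α] {M : β → Matrix n n α} {M₀ : Matrix n n α}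
    (h : Tendsto M l (𝓝 M₀)) (hM₀ : IsUnit M₀) :
    Tendsto (fun t => (M t)⁻¹) l (𝓝 M₀⁻¹) := by
  refine (continuousAt_matrix_inv M₀ ?_).tendsto.comp h
  rw [Ring.inverse_eq_inv']
  exact continuousAt_inv₀ ((isUnit_iff_isUnit_det M₀).mp hM₀).ne_zero

theorem Matrix.tendsto_inv_fromBlocks_of_tendsto_inv_zero [ContinuousInv₀ α] [T1Space α]
    {A : Matrix m m α} {B : Matrix m n α} {C : Matrix n m α} {D : β → Matrix n n α} (hA : IsUnit A)
    (hD : ∀ᶠ t in l, IsUnit (D t)) (hDinv : Tendsto (fun t => (D t)⁻¹) l (𝓝 0)) :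
    (∀ᶠ t in l, IsUnit (fromBlocks A B C (D t))) ∧
      Tendsto (fun t => (fromBlocks A B C (D t))⁻¹) l (𝓝 (fromBlocks A⁻¹ 0 0 0)) := by
  have hE : Tendsto (fun t => fromBlocks A (B * (D t)⁻¹) C 1) l (𝓝 (fromBlocks A 0 C 1)) := by
    have hcont : Continuous fun X : Matrix n n α => fromBlocks A (B * X) C 1 :=
      continuous_const.matrix_fromBlocks (continuous_const.matrix_mul continuous_id)
        continuous_const continuous_const
    simpa [Function.comp_def] using (hcont.tendsto 0).comp hDinv
  have hE₀ : IsUnit (fromBlocks A 0 C (1 : Matrix n n α)) :=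
    isUnit_fromBlocks_zero₁₂.mpr ⟨hA, isUnit_one⟩
  refine ⟨?_, ?_⟩
  · filter_upwards [hD, hE.eventually_isUnit_matrix hE₀] with t hDt hEt
    exact isUnit_fromBlocks_of_isUnit_mul_inv hDt hEt
  · have hdiag : Tendsto (fun t => fromBlocks (1 : Matrix m m α) 0 0 (D t)⁻¹) l
        (𝓝 (fromBlocks 1 0 0 0)) :=
      ((continuous_const.matrix_fromBlocks continuous_const continuous_const
        continuous_id).tendsto 0).comp hDinv
    have hlim : fromBlocks (1 : Matrix m m α) 0 0 0 * (fromBlocks A 0 C 1)⁻¹ =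
        fromBlocks A⁻¹ (0 : Matrix m n α) 0 (0 : Matrix n n α) := by
      rw [inv_fromBlocks_zero₁₂_of_isUnit_iff _ _ _ (iff_of_true hA isUnit_one),
        fromBlocks_multiply]
      simp
    rw [← hlim]
    refine (hdiag.mul (hE.matrix_inv hE₀)).congr' ?_
    filter_upwards [hD] with t hDt
    exact (inv_fromBlocks_eq_fromBlocks_one_zero_zero_mul hDt).symm

end Topology

theorem blockMatrix_inverse_limit_general
    {m k : ℕ}
    (A : Matrix (Fin m) (Fin m) ℝ) (hA : IsUnit A)
    (B : Matrix (Fin m) (Fin k) ℝ)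
    (t₀ : ℝ) (ht₀ : 0 < t₀)
    (C : ℝ → Matrix (Fin k) (Fin k) ℝ)
    (hCinv : ∀ t, 0 < t → t < t₀ → IsUnit (C t))
    (hClim : ∀ i j, Tendsto (fun t => (C t)⁻¹ i j)
      (nhdsWithin 0 (Set.Ioi 0)) (nhds 0)) :
    ∃ t₁, 0 < t₁ ∧ t₁ ≤ t₀ ∧
      (∀ t, 0 < t → t < t₁ → IsUnit (Matrix.fromBlocks A B Bᵀ (C t))) ∧
      (∀ i j, Tendsto (fun t => (Matrix.fromBlocks A B Bᵀ (C t))⁻¹ i j)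
        (nhdsWithin 0 (Set.Ioi 0))
        (nhds (Matrix.fromBlocks A⁻¹ 0 0 0 i j))) := by
  have hCu : ∀ᶠ t in 𝓝[>] 0, IsUnit (C t) := by
    filter_upwards [Ioo_mem_nhdsGT ht₀] with t ⟨ht0, ht⟩ using hCinv t ht0 ht
  have hCinv0 : Tendsto (fun t => (C t)⁻¹) (𝓝[>] 0) (𝓝 0) :=
    tendsto_pi_nhds.mpr fun i => tendsto_pi_nhds.mpr (hClim i)
  obtain ⟨hunit, hlim⟩ :=
    tendsto_inv_fromBlocks_of_tendsto_inv_zero (B := B) (C := Bᵀ) hA hCu hCinv0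
  obtain ⟨u, hu, hsub⟩ := mem_nhdsGT_iff_exists_Ioo_subset.mp hunit
  refine ⟨min u t₀, lt_min hu ht₀, min_le_right u t₀, ?_, ?_⟩
  · exact fun t ht0 ht => hsub ⟨ht0, ht.trans_le (min_le_left u t₀)⟩
  · exact fun i j => tendsto_pi_nhds.mp (tendsto_pi_nhds.mp hlim i) j

/-- Block-matrix limit at the core of the analysis of the inverse stiffness
matrix of a patch containing a nearly degenerate triangulation: if
`C(t)⁻¹ → 0` entrywise as `t → 0⁺`, then the inverse of the block matrix
`[[A, B], [Bᵀ, C(t)]]` converges entrywise to `[[A⁻¹, 0], [0, 0]]`. -/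
theorem blockMatrix_inverse_limit
    {m k : ℕ} (hm : 1 ≤ m) (hk : 1 ≤ k)
    (A : Matrix (Fin m) (Fin m) ℝ) (hA : IsUnit A)
    (B : Matrix (Fin m) (Fin k) ℝ)
    (t₀ : ℝ) (ht₀ : 0 < t₀)
    (C : ℝ → Matrix (Fin k) (Fin k) ℝ)
    (hCsymm : ∀ t, 0 < t → t < t₀ → (C t).IsSymm)
    (hCinv : ∀ t, 0 < t → t < t₀ → IsUnit (C t))
    (hClim : ∀ i j, Tendsto (fun t => (C t)⁻¹ i j)
      (nhdsWithin 0 (Set.Ioi 0)) (nhds 0)) :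
    ∃ t₁, 0 < t₁ ∧ t₁ ≤ t₀ ∧
      (∀ t, 0 < t → t < t₁ → IsUnit (Matrix.fromBlocks A B Bᵀ (C t))) ∧
      (∀ i j, Tendsto (fun t => (Matrix.fromBlocks A B Bᵀ (C t))⁻¹ i j)
        (nhdsWithin 0 (Set.Ioi 0))
        (nhds (Matrix.fromBlocks A⁻¹ 0 0 0 i j))) :=
  blockMatrix_inverse_limit_general A hA B t₀ ht₀ C hCinv hClim
end
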